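/- arXiv:1710.09652 — 7 statements merged into one kernel-verified Lean document; each statement's English description precedes it below -/
import Mathlib

section
/- Let r ≥ 3 be an integer and let G be a coloured graph on n vertices that is both RK_r-free and BK_{r+1}-free and satisfies δ(G) > ((14r−24)/(7r−5))·n. Then G does not contain J as a subgraph. -/
/-- A coloured graph structure on a weight function: symmetric, `{0,1,2}`-valued,
vanishing on the diagonal. -/
def IsColoured {V : Type*} (w : V → V → ℕ) : Prop :=
  (∀ x y, w x y = w y x) ∧ (∀ x y, w x y ≤ 2) ∧ (∀ x, w x x = 0)

/-- The coloured graph with weight function `f` on `Fin m` is a subgraph of `(V, w)`. -/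
def HasSub {V : Type*} (w : V → V → ℕ) {m : ℕ} (f : Fin m → Fin m → ℕ) : Prop :=
  ∃ φ : Fin m → V, Function.Injective φ ∧ ∀ x y, f x y ≤ w (φ x) (φ y)

/-- The red clique `RK_m`: every edge has weight `2`. -/
def RK (m : ℕ) : Fin m → Fin m → ℕ := fun x y => if x = y then 0 else 2

/-- The blue clique `BK_m`: every edge has weight `1`. -/
def BK (m : ℕ) : Fin m → Fin m → ℕ := fun x y => if x = y then 0 else 1

/-- The coloured graph `G_{t,i}` of order `t - i`: a red clique `RK_i` (the first `i`
vertices) and a blue clique `BK_{t-2i}`, joined by edges of weight `1`. -/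
def Gt (t i : ℕ) : Fin (t - i) → Fin (t - i) → ℕ :=
  fun x y => if x = y then 0 else if x.val < i ∧ y.val < i then 2 else 1

/-- `(V, w)` is `𝓕_t`-free, where `𝓕_t = {G_{t,i} : 1 ≤ i ≤ t/2}`. -/
def FamFree {V : Type*} (w : V → V → ℕ) (t : ℕ) : Prop :=
  ∀ i, 1 ≤ i → 2 * i ≤ t → ¬ HasSub w (Gt t i)

/-- The coloured graph `J` of order `r + 1`: the first `r - 3` vertices form the set `A`,
and the last four vertices are `b' = r-3`, `b'' = r-2`, `c' = r-1`, `c'' = r`; the edge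
`c'c''` has weight `0`, the edges `b'c'` and `b''c''` have weight `1`, and all other
edges have weight `2`. -/
def Jw (r : ℕ) : Fin (r + 1) → Fin (r + 1) → ℕ := fun x y =>
  if x = y then 0
  else if (x.val = r - 1 ∧ y.val = r) ∨ (x.val = r ∧ y.val = r - 1) then 0
  else if (x.val = r - 3 ∧ y.val = r - 1) ∨ (x.val = r - 1 ∧ y.val = r - 3) ∨
          (x.val = r - 2 ∧ y.val = r) ∨ (x.val = r ∧ y.val = r - 2) then 1
  else 2

lemma Jw_eq_two' {r : ℕ} {x y : Fin (r+1)} (hxy : x.val ≠ y.val)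
    (h1 : ¬((x.val = r-3 ∧ y.val = r-1) ∨ (x.val = r-1 ∧ y.val = r-3) ∨
          (x.val = r-2 ∧ y.val = r) ∨ (x.val = r ∧ y.val = r-2)))
    (h2 : ¬((x.val = r-1 ∧ y.val = r) ∨ (x.val = r ∧ y.val = r-1))) :
    Jw r x y = 2 := by
  unfold Jw
  rw [if_neg (fun h => hxy (congrArg Fin.val h)), if_neg h2, if_neg h1]

lemma Jw_ge_one' {r : ℕ} {x y : Fin (r+1)} (hxy : x.val ≠ y.val)
    (h2 : ¬((x.val = r-1 ∧ y.val = r) ∨ (x.val = r ∧ y.val = r-1))) :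
    1 ≤ Jw r x y := by
  unfold Jw
  rw [if_neg (fun h => hxy (congrArg Fin.val h)), if_neg h2]
  split <;> omega

def cw (r i : ℕ) : ℕ := if i < r-3 then 7 else if i < r-1 then 6 else 2

lemma cw_ge_two (r i : ℕ) : 2 ≤ cw r i := by unfold cw; split_ifs <;> omega
lemma cw_ge_six (r i : ℕ) (h : i < r-1) : 6 ≤ cw r i := by unfold cw; split_ifs <;> omega
lemma cw_eq_seven (r i : ℕ) (h : i < r-3) : cw r i = 7 := by unfold cw; rw [if_pos h]

lemma sum_cw (r : ℕ) (hr : 3 ≤ r) : ∑ i ∈ Finset.range (r+1), cw r i = 7*r-5 := by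
  rw [Finset.range_eq_Ico,
    ← Finset.sum_Ico_consecutive _ (Nat.zero_le (r-1)) (show r-1 ≤ r+1 by omega),
    ← Finset.sum_Ico_consecutive _ (Nat.zero_le (r-3)) (show r-3 ≤ r-1 by omega)]
  have e1 : ∑ i ∈ Finset.Ico 0 (r-3), cw r i = (r-3) * 7 := by
    rw [Finset.sum_congr rfl (fun i hi => cw_eq_seven r i (Finset.mem_Ico.mp hi).2)]
    simp [Finset.sum_const, Nat.card_Ico]
  have e2 : ∑ i ∈ Finset.Ico (r-3) (r-1), cw r i = (r-1-(r-3)) * 6 := by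
    rw [Finset.sum_congr rfl (fun i hi => show cw r i = 6 by
      have h := Finset.mem_Ico.mp hi
      unfold cw; rw [if_neg (by omega), if_pos h.2])]
    simp [Finset.sum_const, Nat.card_Ico]
  have e3 : ∑ i ∈ Finset.Ico (r-1) (r+1), cw r i = (r+1-(r-1)) * 2 := by
    rw [Finset.sum_congr rfl (fun i hi => show cw r i = 2 by
      have h := Finset.mem_Ico.mp hi
      unfold cw; rw [if_neg (by omega), if_neg (by omega)])]
    simp [Finset.sum_const, Nat.card_Ico]
  rw [e1, e2, e3]; omega

lemma hasSub_RK {V : Type*} (w : V → V → ℕ) (m : ℕ) (ψ : Fin m → V)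
    (h1 : Function.Injective ψ) (h2 : ∀ x y : Fin m, x ≠ y → 2 ≤ w (ψ x) (ψ y)) :
    HasSub w (RK m) :=
  ⟨ψ, h1, fun x y => by
    unfold RK; split_ifs with h
    · exact Nat.zero_le _
    · exact h2 x y h⟩

lemma hasSub_BK {V : Type*} (w : V → V → ℕ) (m : ℕ) (ψ : Fin m → V)
    (h1 : Function.Injective ψ) (h2 : ∀ x y : Fin m, x ≠ y → 1 ≤ w (ψ x) (ψ y)) :
    HasSub w (BK m) :=
  ⟨ψ, h1, fun x y => by
    unfold BK; split_ifs with h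
    · exact Nat.zero_le _
    · exact h2 x y h⟩

lemma inj_ite {V : Type*} {m s : ℕ} (φ : Fin s → V) (hφ : Function.Injective φ) (v : V)
    (hv : ∀ j, φ j ≠ v) (g : Fin m → Fin s) (hg : Function.Injective g) (q : ℕ) :
    Function.Injective (fun k : Fin m => if k.val = q then v else φ (g k)) := by
  intro x y h
  dsimp only at h
  split_ifs at h with h1 h2
  · exact Fin.ext (h1.trans h2.symm)
  · exact absurd h.symm (hv _)
  · exact absurd h (hv _)
  · exact hg (hφ h)

/-- Lemma: a `{RK_r, BK_{r+1}}`-free coloured graph on `n` vertices with minimum degree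
greater than `((14r-24)/(7r-5))·n` does not contain `J`. -/
theorem exclude_J {V : Type*} [Fintype V] (r : ℕ) (hr : 3 ≤ r)
    (w : V → V → ℕ) (hG : IsColoured w)
    (hRK : ¬ HasSub w (RK r)) (hBK : ¬ HasSub w (BK (r + 1)))
    (hdeg : ∀ x : V,
      (14 * (r : ℝ) - 24) / (7 * (r : ℝ) - 5) * (Fintype.card V : ℝ) < ∑ y : V, (w x y : ℝ)) :
    ¬ HasSub w (Jw r) := by
  obtain ⟨hsym, hle2, hdiag⟩ := hG
  rintro ⟨φ, hinj, hφ⟩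
  obtain ⟨b1, hb1⟩ : ∃ k : Fin (r+1), k.val = r-3 := ⟨⟨r-3, by omega⟩, rfl⟩
  obtain ⟨b2, hb2⟩ : ∃ k : Fin (r+1), k.val = r-2 := ⟨⟨r-2, by omega⟩, rfl⟩
  obtain ⟨c1, hc1⟩ : ∃ k : Fin (r+1), k.val = r-1 := ⟨⟨r-1, by omega⟩, rfl⟩
  obtain ⟨c2, hc2⟩ : ∃ k : Fin (r+1), k.val = r := ⟨⟨r, by omega⟩, rfl⟩
  -- identity-like embedding Fin r → Fin (r+1)
  obtain ⟨g0, hg0⟩ : ∃ g : Fin r → Fin (r+1), ∀ k, (g k).val = k.val :=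
    ⟨fun k => ⟨k.val, by omega⟩, fun k => rfl⟩
  have hg0inj : Function.Injective g0 := fun a b h => Fin.ext (by
    have := congrArg Fin.val h; rwa [hg0, hg0] at this)
  -- embedding Fin r → Fin (r+1) skipping r-1 (sends r-1 to r)
  obtain ⟨g1, hg1⟩ : ∃ g : Fin r → Fin (r+1), ∀ k, (g k).val = if k.val = r-1 then r else k.val :=
    ⟨fun k => if h : k.val = r-1 then ⟨r, by omega⟩ else ⟨k.val, by omega⟩,
     fun k => by by_cases h : k.val = r-1 <;> simp [h]⟩
  have hg1inj : Function.Injective g1 := by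
    intro a b h
    have h' := congrArg Fin.val h
    rw [hg1, hg1] at h'
    have ha := a.isLt; have hb := b.isLt
    apply Fin.ext
    split_ifs at h' <;> omega
  -- exact values on the special pairs
  have hcc : w (φ c1) (φ c2) = 0 := by
    by_contra h
    apply hBK
    apply hasSub_BK w (r+1) φ hinj
    intro x y hxy
    have hvne : x.val ≠ y.val := fun hc => hxy (Fin.ext hc)
    by_cases hp : (x.val = r-1 ∧ y.val = r) ∨ (x.val = r ∧ y.val = r-1)
    · rcases hp with ⟨hx, hy⟩ | ⟨hx, hy⟩
      · rw [show x = c1 from Fin.ext (by omega), show y = c2 from Fin.ext (by omega)]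
        omega
      · rw [show x = c2 from Fin.ext (by omega), show y = c1 from Fin.ext (by omega), hsym]
        omega
    · exact le_trans (Jw_ge_one' hvne hp) (hφ x y)
  have hb1c1 : w (φ b1) (φ c1) = 1 := by
    have hge : 1 ≤ w (φ b1) (φ c1) :=
      le_trans (Jw_ge_one' (by omega) (by omega)) (hφ b1 c1)
    have hle : w (φ b1) (φ c1) ≤ 1 := by
      by_contra h
      apply hRK
      apply hasSub_RK w r (fun k => φ (g0 k)) (fun a b hab => hg0inj (hinj hab))
      intro x y hxy
      have hvne : (g0 x).val ≠ (g0 y).val := by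
        rw [hg0, hg0]; exact fun hc => hxy (Fin.ext hc)
      by_cases hp : ((g0 x).val = r-3 ∧ (g0 y).val = r-1) ∨ ((g0 x).val = r-1 ∧ (g0 y).val = r-3)
      · rcases hp with ⟨hx, hy⟩ | ⟨hx, hy⟩
        · rw [show g0 x = b1 from Fin.ext (by omega), show g0 y = c1 from Fin.ext (by omega)]
          omega
        · rw [show g0 x = c1 from Fin.ext (by omega), show g0 y = b1 from Fin.ext (by omega), hsym]
          omega
      · refine le_trans (le_of_eq (Jw_eq_two' hvne ?_ ?_).symm) (hφ (g0 x) (g0 y)) <;>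
          (have hx := x.isLt; have hy := y.isLt;
           have hgx := hg0 x; have hgy := hg0 y; omega)
    omega
  have hb2c2 : w (φ b2) (φ c2) = 1 := by
    have hge : 1 ≤ w (φ b2) (φ c2) :=
      le_trans (Jw_ge_one' (by omega) (by omega)) (hφ b2 c2)
    have hle : w (φ b2) (φ c2) ≤ 1 := by
      by_contra h
      apply hRK
      apply hasSub_RK w r (fun k => φ (g1 k)) (fun a b hab => hg1inj (hinj hab))
      intro x y hxy
      have hgx := hg1 x; have hgy := hg1 y
      have hx' := x.isLt; have hy' := y.isLt
      have hvne : (g1 x).val ≠ (g1 y).val := by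
        intro hc
        apply hxy
        apply Fin.ext
        rw [hgx, hgy] at hc
        split_ifs at hc <;> omega
      by_cases hp : ((g1 x).val = r-2 ∧ (g1 y).val = r) ∨ ((g1 x).val = r ∧ (g1 y).val = r-2)
      · rcases hp with ⟨hx, hy⟩ | ⟨hx, hy⟩
        · rw [show g1 x = b2 from Fin.ext (by omega), show g1 y = c2 from Fin.ext (by omega)]
          omega
        · rw [show g1 x = c2 from Fin.ext (by omega), show g1 y = b2 from Fin.ext (by omega), hsym]
          omega
      · have hgx' : ((g1 x).val = r ∧ x.val = r-1) ∨ ((g1 x).val = x.val ∧ x.val ≠ r-1) := by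
          by_cases h1 : x.val = r-1
          · exact Or.inl ⟨by rw [hgx, if_pos h1], h1⟩
          · exact Or.inr ⟨by rw [hgx, if_neg h1], h1⟩
        have hgy' : ((g1 y).val = r ∧ y.val = r-1) ∨ ((g1 y).val = y.val ∧ y.val ≠ r-1) := by
          by_cases h1 : y.val = r-1
          · exact Or.inl ⟨by rw [hgy, if_pos h1], h1⟩
          · exact Or.inr ⟨by rw [hgy, if_neg h1], h1⟩
        refine le_trans (le_of_eq (Jw_eq_two' hvne ?_ ?_).symm) (hφ (g1 x) (g1 y)) <;> omega
    omega
  -- the five constraints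
  have hB1 : ∀ v : V, ∃ k : Fin (r+1), k.val ≠ r ∧ w v (φ k) = 0 := by
    intro v
    by_cases hv : ∃ j, φ j = v
    · obtain ⟨j, rfl⟩ := hv
      by_cases hj : j.val = r
      · refine ⟨c1, by omega, ?_⟩
        rw [show j = c2 from Fin.ext (by omega), hsym]
        exact hcc
      · exact ⟨j, hj, hdiag _⟩
    · push_neg at hv
      by_contra hcon
      push_neg at hcon
      apply hBK
      apply hasSub_BK w (r+1) (fun k => if k.val = r then v else φ k)
        (inj_ite φ hinj v hv id Function.injective_id r)
      intro x y hxy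
      have hvne : x.val ≠ y.val := fun hc => hxy (Fin.ext hc)
      by_cases hx : x.val = r <;> by_cases hy : y.val = r
      · exact absurd (hx.trans hy.symm) hvne
      · rw [if_pos hx, if_neg hy]
        have := hcon y hy; omega
      · rw [if_neg hx, if_pos hy, hsym]
        have := hcon x hx; omega
      · rw [if_neg hx, if_neg hy]
        exact le_trans (Jw_ge_one' hvne (by omega)) (hφ x y)
  have hB2 : ∀ v : V, ∃ k : Fin (r+1), k.val ≠ r-1 ∧ w v (φ k) = 0 := by
    intro v
    by_cases hv : ∃ j, φ j = v
    · obtain ⟨j, rfl⟩ := hv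
      by_cases hj : j.val = r-1
      · refine ⟨c2, by omega, ?_⟩
        rw [show j = c1 from Fin.ext (by omega)]
        exact hcc
      · exact ⟨j, hj, hdiag _⟩
    · push_neg at hv
      by_contra hcon
      push_neg at hcon
      apply hBK
      apply hasSub_BK w (r+1) (fun k => if k.val = r-1 then v else φ k)
        (inj_ite φ hinj v hv id Function.injective_id (r-1))
      intro x y hxy
      have hvne : x.val ≠ y.val := fun hc => hxy (Fin.ext hc)
      by_cases hx : x.val = r-1 <;> by_cases hy : y.val = r-1
      · exact absurd (hx.trans hy.symm) hvne
      · rw [if_pos hx, if_neg hy]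
        have := hcon y hy; omega
      · rw [if_neg hx, if_pos hy, hsym]
        have := hcon x hx; omega
      · rw [if_neg hx, if_neg hy]
        exact le_trans (Jw_ge_one' hvne (by omega)) (hφ x y)
  have hR1 : ∀ v : V, ∃ k : Fin (r+1), k.val ≠ r-1 ∧ k.val ≠ r ∧ w v (φ k) ≤ 1 := by
    intro v
    by_cases hv : ∃ j, φ j = v
    · obtain ⟨j, rfl⟩ := hv
      by_cases hj1 : j.val = r-1
      · refine ⟨b1, by omega, by omega, ?_⟩
        rw [show j = c1 from Fin.ext (by omega), hsym, hb1c1]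
      · by_cases hj2 : j.val = r
        · refine ⟨b2, by omega, by omega, ?_⟩
          rw [show j = c2 from Fin.ext (by omega), hsym, hb2c2]
        · exact ⟨j, hj1, hj2, by rw [hdiag]; omega⟩
    · push_neg at hv
      by_contra hcon
      push_neg at hcon
      apply hRK
      apply hasSub_RK w r (fun k => if k.val = r-1 then v else φ (g0 k))
        (inj_ite φ hinj v hv g0 hg0inj (r-1))
      intro x y hxy
      have hgx := hg0 x; have hgy := hg0 y
      have hx' := x.isLt; have hy' := y.isLt
      by_cases hx : x.val = r-1 <;> by_cases hy : y.val = r-1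
      · exact absurd (Fin.ext (hx.trans hy.symm)) hxy
      · rw [if_pos hx, if_neg hy]
        have := hcon (g0 y) (by omega) (by omega); omega
      · rw [if_neg hx, if_pos hy, hsym]
        have := hcon (g0 x) (by omega) (by omega); omega
      · rw [if_neg hx, if_neg hy]
        have hvne : (g0 x).val ≠ (g0 y).val := fun hc => hxy (Fin.ext (by omega))
        exact le_trans (le_of_eq (Jw_eq_two' hvne (by omega) (by omega)).symm) (hφ _ _)
  have hR2 : ∀ v : V, ∃ k : Fin (r+1), k.val ≠ r-3 ∧ k.val ≠ r ∧ w v (φ k) ≤ 1 := by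
    intro v
    by_cases hv : ∃ j, φ j = v
    · obtain ⟨j, rfl⟩ := hv
      by_cases hj1 : j.val = r-3
      · refine ⟨c1, by omega, by omega, ?_⟩
        rw [show j = b1 from Fin.ext (by omega), hb1c1]
      · by_cases hj2 : j.val = r
        · refine ⟨c1, by omega, by omega, ?_⟩
          rw [show j = c2 from Fin.ext (by omega), hsym, hcc]
          omega
        · exact ⟨j, hj1, hj2, by rw [hdiag]; omega⟩
    · push_neg at hv
      by_contra hcon
      push_neg at hcon
      apply hRK
      apply hasSub_RK w r (fun k => if k.val = r-3 then v else φ (g0 k))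
        (inj_ite φ hinj v hv g0 hg0inj (r-3))
      intro x y hxy
      have hgx := hg0 x; have hgy := hg0 y
      have hx' := x.isLt; have hy' := y.isLt
      by_cases hx : x.val = r-3 <;> by_cases hy : y.val = r-3
      · exact absurd (Fin.ext (hx.trans hy.symm)) hxy
      · rw [if_pos hx, if_neg hy]
        have := hcon (g0 y) (by omega) (by omega); omega
      · rw [if_neg hx, if_pos hy, hsym]
        have := hcon (g0 x) (by omega) (by omega); omega
      · rw [if_neg hx, if_neg hy]
        have hvne : (g0 x).val ≠ (g0 y).val := fun hc => hxy (Fin.ext (by omega))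
        exact le_trans (le_of_eq (Jw_eq_two' hvne (by omega) (by omega)).symm) (hφ _ _)
  have hR3 : ∀ v : V, ∃ k : Fin (r+1), k.val ≠ r-2 ∧ k.val ≠ r-1 ∧ w v (φ k) ≤ 1 := by
    intro v
    by_cases hv : ∃ j, φ j = v
    · obtain ⟨j, rfl⟩ := hv
      by_cases hj1 : j.val = r-2
      · refine ⟨c2, by omega, by omega, ?_⟩
        rw [show j = b2 from Fin.ext (by omega), hb2c2]
      · by_cases hj2 : j.val = r-1
        · refine ⟨c2, by omega, by omega, ?_⟩
          rw [show j = c1 from Fin.ext (by omega), hcc]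
          omega
        · exact ⟨j, hj1, hj2, by rw [hdiag]; omega⟩
    · push_neg at hv
      by_contra hcon
      push_neg at hcon
      apply hRK
      apply hasSub_RK w r (fun k => if k.val = r-2 then v else φ (g1 k))
        (inj_ite φ hinj v hv g1 hg1inj (r-2))
      intro x y hxy
      have hx' := x.isLt; have hy' := y.isLt
      have hgx' : ((g1 x).val = r ∧ x.val = r-1) ∨ ((g1 x).val = x.val ∧ x.val ≠ r-1) := by
        by_cases h1 : x.val = r-1
        · exact Or.inl ⟨by rw [hg1, if_pos h1], h1⟩
        · exact Or.inr ⟨by rw [hg1, if_neg h1], h1⟩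
      have hgy' : ((g1 y).val = r ∧ y.val = r-1) ∨ ((g1 y).val = y.val ∧ y.val ≠ r-1) := by
        by_cases h1 : y.val = r-1
        · exact Or.inl ⟨by rw [hg1, if_pos h1], h1⟩
        · exact Or.inr ⟨by rw [hg1, if_neg h1], h1⟩
      by_cases hx : x.val = r-2 <;> by_cases hy : y.val = r-2
      · exact absurd (Fin.ext (hx.trans hy.symm)) hxy
      · rw [if_pos hx, if_neg hy]
        have := hcon (g1 y) (by omega) (by omega); omega
      · rw [if_neg hx, if_pos hy, hsym]
        have := hcon (g1 x) (by omega) (by omega); omega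
      · rw [if_neg hx, if_neg hy]
        have hvne : (g1 x).val ≠ (g1 y).val := fun hc => hxy (Fin.ext (by omega))
        exact le_trans (le_of_eq (Jw_eq_two' hvne (by omega) (by omega)).symm) (hφ _ _)
  -- pointwise weighted bound
  have hmain : ∀ v : V, ∑ k : Fin (r+1), cw r k.val * w v (φ k) ≤ 14*r - 24 := by
    intro v
    obtain ⟨k1, hk1r, hk1w⟩ := hB1 v
    obtain ⟨k2, hk2r, hk2w⟩ := hB2 v
    obtain ⟨k3, hk3a, hk3b, hk3w⟩ := hR1 v
    obtain ⟨k4, hk4a, hk4b, hk4w⟩ := hR2 v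
    obtain ⟨k5, hk5a, hk5b, hk5w⟩ := hR3 v
    set t : Fin (r+1) → ℕ := fun k => cw r k.val * (2 - w v (φ k)) with ht
    have hsplit : (∑ k : Fin (r+1), cw r k.val * w v (φ k)) + ∑ k : Fin (r+1), t k
        = 2*(7*r-5) := by
      rw [← Finset.sum_add_distrib]
      have he : ∀ k : Fin (r+1), cw r k.val * w v (φ k) + t k = 2 * cw r k.val := by
        intro k
        have h2 := hle2 v (φ k)
        have htk : t k = cw r k.val * (2 - w v (φ k)) := by rw [ht]
        rw [htk, ← Nat.mul_add, show w v (φ k) + (2 - w v (φ k)) = 2 by omega, Nat.mul_comm]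
      rw [Finset.sum_congr rfl (fun k _ => he k), ← Finset.mul_sum,
        Fin.sum_univ_eq_sum_range (fun i => cw r i) (r+1), sum_cw r hr]
    have hdef : 14 ≤ ∑ k : Fin (r+1), t k := by
      have single : ∀ k0 : Fin (r+1), t k0 ≤ ∑ k : Fin (r+1), t k := fun k0 =>
        Finset.single_le_sum (fun i _ => Nat.zero_le _) (Finset.mem_univ k0)
      have pair : ∀ a b : Fin (r+1), a ≠ b → t a + t b ≤ ∑ k : Fin (r+1), t k := by
        intro a b hab
        have hs : ∑ k ∈ ({a, b} : Finset (Fin (r+1))), t k ≤ ∑ k : Fin (r+1), t k :=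
          Finset.sum_le_sum_of_subset (Finset.subset_univ _)
        rwa [Finset.sum_pair hab] at hs
      have triple : ∀ a b c : Fin (r+1), a ≠ b → a ≠ c → b ≠ c →
          t a + (t b + t c) ≤ ∑ k : Fin (r+1), t k := by
        intro a b c hab hac hbc
        have hs : ∑ k ∈ ({a, b, c} : Finset (Fin (r+1))), t k ≤ ∑ k : Fin (r+1), t k :=
          Finset.sum_le_sum_of_subset (Finset.subset_univ _)
        rwa [Finset.sum_insert (by simp [hab, hac]), Finset.sum_pair hbc] at hs
      have ht1 : t k1 = cw r k1.val * 2 := by rw [ht]; dsimp only; rw [hk1w]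
      have ht2 : t k2 = cw r k2.val * 2 := by rw [ht]; dsimp only; rw [hk2w]
      have ht3 : cw r k3.val ≤ t k3 := by
        rw [ht]; dsimp only
        calc cw r k3.val = cw r k3.val * 1 := (Nat.mul_one _).symm
          _ ≤ cw r k3.val * (2 - w v (φ k3)) := Nat.mul_le_mul (le_refl _) (by omega)
      have ht4 : cw r k4.val ≤ t k4 := by
        rw [ht]; dsimp only
        calc cw r k4.val = cw r k4.val * 1 := (Nat.mul_one _).symm
          _ ≤ cw r k4.val * (2 - w v (φ k4)) := Nat.mul_le_mul (le_refl _) (by omega)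
      have ht5 : cw r k5.val ≤ t k5 := by
        rw [ht]; dsimp only
        calc cw r k5.val = cw r k5.val * 1 := (Nat.mul_one _).symm
          _ ≤ cw r k5.val * (2 - w v (φ k5)) := Nat.mul_le_mul (le_refl _) (by omega)
      by_cases hA : k1.val < r-3
      · have h7 := cw_eq_seven r k1.val hA
        have := single k1
        omega
      · by_cases hB : k1.val = r-3
        · have h41 : k4 ≠ k1 := fun h => hk4a (by rw [h, hB])
          have hcw1 : 6 ≤ cw r k1.val := cw_ge_six r _ (by omega)
          have hcw4 : 2 ≤ cw r k4.val := cw_ge_two r _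
          have := pair k4 k1 h41
          omega
        · by_cases hC : k1.val = r-2
          · have h51 : k5 ≠ k1 := fun h => hk5a (by rw [h, hC])
            have hcw1 : 6 ≤ cw r k1.val := cw_ge_six r _ (by omega)
            have hcw5 : 2 ≤ cw r k5.val := cw_ge_two r _
            have := pair k5 k1 h51
            omega
          · have hD : k1.val = r-1 := by have := k1.isLt; omega
            have h21 : k2 ≠ k1 := fun h => hk2r (by rw [h, hD])
            by_cases hE : k2.val < r-1
            · have hcw2 : 6 ≤ cw r k2.val := cw_ge_six r _ hE
              have hcw1 : 2 ≤ cw r k1.val := cw_ge_two r _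
              have := pair k2 k1 h21
              omega
            · have hE' : k2.val = r := by have := k2.isLt; omega
              have h31 : k3 ≠ k1 := fun h => hk3a (by rw [h, hD])
              have h32 : k3 ≠ k2 := fun h => hk3b (by rw [h, hE'])
              have hcw3 : 6 ≤ cw r k3.val := cw_ge_six r _ (by have := k3.isLt; omega)
              have hcw1 : 2 ≤ cw r k1.val := cw_ge_two r _
              have hcw2 : 2 ≤ cw r k2.val := cw_ge_two r _
              have := triple k1 k2 k3 h21.symm h31.symm h32.symm
              omega
    omega
  -- global counting
  have hsumc : ∑ k : Fin (r+1), cw r k.val = 7*r-5 := by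
    rw [Fin.sum_univ_eq_sum_range (fun i => cw r i) (r+1)]; exact sum_cw r hr
  have htotal : ∑ k : Fin (r+1), cw r k.val * (∑ y : V, w (φ k) y)
      ≤ Fintype.card V * (14*r-24) := by
    calc ∑ k : Fin (r+1), cw r k.val * (∑ y : V, w (φ k) y)
        = ∑ k : Fin (r+1), ∑ y : V, cw r k.val * w (φ k) y :=
          Finset.sum_congr rfl fun k _ => by rw [Finset.mul_sum]
      _ = ∑ y : V, ∑ k : Fin (r+1), cw r k.val * w (φ k) y := Finset.sum_comm
      _ = ∑ y : V, ∑ k : Fin (r+1), cw r k.val * w y (φ k) :=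
          Finset.sum_congr rfl fun y _ => Finset.sum_congr rfl fun k _ => by rw [hsym]
      _ ≤ ∑ _y : V, (14*r-24) := Finset.sum_le_sum fun y _ => hmain y
      _ = Fintype.card V * (14*r-24) := by
          rw [Finset.sum_const, smul_eq_mul, Finset.card_univ]
  have hrR : (3:ℝ) ≤ (r:ℝ) := by exact_mod_cast hr
  have hQpos : (0:ℝ) < 7*(r:ℝ) - 5 := by linarith
  have hcast : ∑ k : Fin (r+1), (cw r k.val : ℝ) = 7*(r:ℝ) - 5 := by
    rw [← Nat.cast_sum, hsumc, Nat.cast_sub (by omega : 5 ≤ 7*r)]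
    push_cast; ring
  have hlt : (∑ k : Fin (r+1), (cw r k.val : ℝ)) * ((14*(r:ℝ)-24) / (7*(r:ℝ)-5) * (Fintype.card V : ℝ))
      < ∑ k : Fin (r+1), (cw r k.val : ℝ) * (∑ y : V, (w (φ k) y : ℝ)) := by
    rw [Finset.sum_mul]
    refine Finset.sum_lt_sum_of_nonempty Finset.univ_nonempty fun k _ => ?_
    have hc2 : (2:ℝ) ≤ (cw r k.val : ℝ) := by exact_mod_cast cw_ge_two r k.val
    exact mul_lt_mul_of_pos_left (hdeg (φ k)) (by linarith)
  have hle : ∑ k : Fin (r+1), (cw r k.val : ℝ) * (∑ y : V, (w (φ k) y : ℝ))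
      ≤ (Fintype.card V : ℝ) * (14*(r:ℝ)-24) := by
    have h1 : ((∑ k : Fin (r+1), cw r k.val * (∑ y : V, w (φ k) y) : ℕ) : ℝ)
        ≤ ((Fintype.card V * (14*r-24) : ℕ) : ℝ) := Nat.cast_le.mpr htotal
    push_cast [Nat.cast_sub (show 24 ≤ 14*r by omega)] at h1
    exact h1
  have hne : (7*(r:ℝ)-5) ≠ 0 := ne_of_gt hQpos
  have hkey : (∑ k : Fin (r+1), (cw r k.val : ℝ)) * ((14*(r:ℝ)-24) / (7*(r:ℝ)-5) * (Fintype.card V : ℝ))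
      = (Fintype.card V : ℝ) * (14*(r:ℝ)-24) := by
    rw [hcast]
    field_simp
  linarith [hlt, hle, hkey]
end

section
/- Let r ≥ 3 be an integer and let G be a coloured graph on n vertices that is RK_r-free and BK_{r+1}-free and satisfies δ(G) > ((14r−24)/(7r−5))·n. If every edge of G of weight 1 is secure, then every wicked triangle (x, y, z) of G has w(x,z) = 0 or w(y,z) = 0; in particular, G contains no blue wicked triangle. -/
/-- An `𝓕_{2r}`-free coloured graph `(V, w)` is extremal if every `𝓕_{2r}`-free coloured
graph on `V` whose weight function pointwise dominates `w` coincides with `w`. -/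
def Extremal {V : Type*} (w : V → V → ℕ) (r : ℕ) : Prop :=
  FamFree w (2 * r) ∧
    ∀ w' : V → V → ℕ, IsColoured w' → (∀ x y, w x y ≤ w' x y) → FamFree w' (2 * r) → w' = w

/-- A pair of distinct vertices `x, y` is secure if it lies in the common red
neighbourhood of some red clique on `r - 2` vertices. -/
def Secure {V : Type*} (w : V → V → ℕ) (r : ℕ) (x y : V) : Prop :=
  ∃ A : Finset V, A.card = r - 2 ∧ x ∉ A ∧ y ∉ A ∧
    (∀ a ∈ A, ∀ a' ∈ A, a ≠ a' → w a a' = 2) ∧ (∀ a ∈ A, w a x = 2 ∧ w a y = 2)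

private lemma hasSub_clique {V : Type*} (w : V → V → ℕ) {m c : ℕ} (S : Finset V)
    (hcard : S.card = m) (hpair : ∀ a ∈ S, ∀ b ∈ S, a ≠ b → c ≤ w a b) :
    ∃ φ : Fin m → V, Function.Injective φ ∧
      ∀ i j : Fin m, (if i = j then 0 else c) ≤ w (φ i) (φ j) := by
  have e := S.equivFinOfCardEq hcard
  refine ⟨fun i => (e.symm i : V), fun i j hij => e.symm.injective (Subtype.ext hij),
    fun i j => ?_⟩
  by_cases h : i = j
  · simp [h]
  · simp only [if_neg h]
    exact hpair _ (e.symm i).2 _ (e.symm j).2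
      fun hv => h (e.symm.injective (Subtype.ext hv))

private lemma hasSub_RK' {V : Type*} (w : V → V → ℕ) {m : ℕ} (S : Finset V)
    (hcard : S.card = m) (hpair : ∀ a ∈ S, ∀ b ∈ S, a ≠ b → w a b = 2) :
    HasSub w (RK m) := by
  obtain ⟨φ, hinj, hb⟩ := hasSub_clique w S hcard
    (fun a ha b hb hab => (hpair a ha b hb hab).ge)
  exact ⟨φ, hinj, fun i j => by simpa [RK] using hb i j⟩

private lemma hasSub_BK' {V : Type*} (w : V → V → ℕ) {m : ℕ} (S : Finset V)
    (hcard : S.card = m) (hpair : ∀ a ∈ S, ∀ b ∈ S, a ≠ b → 1 ≤ w a b) :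
    HasSub w (BK m) := by
  obtain ⟨φ, hinj, hb⟩ := hasSub_clique w S hcard hpair
  exact ⟨φ, hinj, fun i j => by simpa [BK] using hb i j⟩

set_option maxHeartbeats 1600000 in
private lemma blue_wicked_false {V : Type*} [Fintype V] (r : ℕ) (hr : 3 ≤ r)
    (w : V → V → ℕ) (hG : IsColoured w)
    (hRK : ¬ HasSub w (RK r)) (hBK : ¬ HasSub w (BK (r + 1)))
    (hdeg : ∀ x : V,
      (14 * (r : ℝ) - 24) / (7 * (r : ℝ) - 5) * (Fintype.card V : ℝ) < ∑ y : V, (w x y : ℝ))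
    (hsec : ∀ x y : V, x ≠ y → w x y = 1 → Secure w r x y)
    (x y z : V) (hxy : w x y = 2) (hxz : w x z = 1) (hyz : w y z = 1) : False := by
  classical
  obtain ⟨hsymm, hle, hdiag⟩ := hG
  have hxy_ne : x ≠ y := by rintro rfl; rw [hdiag] at hxy; omega
  have hxz_ne : x ≠ z := by rintro rfl; rw [hdiag] at hxz; omega
  have hyz_ne : y ≠ z := by rintro rfl; rw [hdiag] at hyz; omega
  obtain ⟨A, hAcard, hxA, hzA, hAcl, hAred⟩ := hsec x z hxz_ne hxz
  obtain ⟨B, hBcard, hyB, hzB, hBcl, hBred⟩ := hsec y z hyz_ne hyz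
  have hR3 : (3 : ℝ) ≤ (r : ℝ) := by exact_mod_cast hr
  have h75 : (0 : ℝ) < 7 * (r : ℝ) - 5 := by linarith
  set θ : ℝ :=
    (2 - (14 * (r : ℝ) - 24) / (7 * (r : ℝ) - 5)) * (Fintype.card V : ℝ) with hθ
  -- row deficiency bound
  have hrow : ∀ u : V, ∑ v : V, (2 - (w u v : ℝ)) < θ := by
    intro u
    have h1 : ∑ v : V, (2 - (w u v : ℝ))
        = 2 * (Fintype.card V : ℝ) - ∑ v : V, (w u v : ℝ) := by
      rw [Finset.sum_sub_distrib, Finset.sum_const, Finset.card_univ, nsmul_eq_mul]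
      ring
    have h2 := hdeg u
    rw [h1, hθ]
    nlinarith [h2]
  -- column deficiency bound
  have hcol : ∀ v : V, ∑ u : V, (2 - (w u v : ℝ)) < θ := by
    intro v
    have h1 : ∑ u : V, (2 - (w u v : ℝ)) = ∑ u : V, (2 - (w v u : ℝ)) := by
      refine Finset.sum_congr rfl fun u _ => ?_
      rw [hsymm u v]
    rw [h1]
    exact hrow v
  have hθpos : 0 < θ := by
    refine lt_of_le_of_lt (Finset.sum_nonneg fun v _ => ?_) (hrow x)
    have := hle x v
    have h2 : ((w x v : ℕ) : ℝ) ≤ 2 := by exact_mod_cast this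
    linarith
  -- zero count bound
  have hZ : ∀ u : V, 2 * (((Finset.univ.filter fun v => w u v = 0).card : ℕ) : ℝ) < θ := by
    intro u
    refine lt_of_le_of_lt ?_ (hrow u)
    have e0 : ∀ v ∈ Finset.univ.filter (fun v : V => w u v = 0), (2 - (w u v : ℝ)) = 2 := by
      intro v hv
      rw [(Finset.mem_filter.mp hv).2]
      norm_num
    have e1 : ∑ v ∈ Finset.univ.filter (fun v : V => w u v = 0), (2 - (w u v : ℝ))
        = 2 * (((Finset.univ.filter fun v : V => w u v = 0).card : ℕ) : ℝ) := by
      rw [Finset.sum_congr rfl e0, Finset.sum_const, nsmul_eq_mul]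
      ring
    rw [← e1]
    refine Finset.sum_le_sum_of_subset_of_nonneg (Finset.filter_subset _ _) fun v _ _ => ?_
    have := hle u v
    have h2 : ((w u v : ℕ) : ℝ) ≤ 2 := by exact_mod_cast this
    linarith
  -- greedy clique lemma
  have greedy : ∀ k : ℕ, ∀ S : Finset V, (k : ℝ) * (θ / 2) < S.card →
      ∃ C : Finset V, C ⊆ S ∧ C.card = k + 1 ∧ ∀ a ∈ C, ∀ b ∈ C, a ≠ b → 1 ≤ w a b := by
    intro k
    induction k with
    | zero =>
      intro S hS
      have h0 : (0 : ℝ) < S.card := by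
        have : ((0 : ℕ) : ℝ) * (θ / 2) = 0 := by norm_num
        rw [this] at hS
        exact hS
      have hpos : 0 < S.card := by exact_mod_cast h0
      obtain ⟨u, hu⟩ := Finset.card_pos.mp hpos
      refine ⟨{u}, Finset.singleton_subset_iff.mpr hu, Finset.card_singleton u, ?_⟩
      intro a ha b hb hab
      rw [Finset.mem_singleton] at ha hb
      exact absurd (ha.trans hb.symm) hab
    | succ k ih =>
      intro S hS
      have hnn : (0 : ℝ) ≤ ((k + 1 : ℕ) : ℝ) * (θ / 2) :=
        mul_nonneg (Nat.cast_nonneg _) (by linarith)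
      have hpos : 0 < S.card := by
        have : (0 : ℝ) < S.card := lt_of_le_of_lt hnn hS
        exact_mod_cast this
      obtain ⟨u, hu⟩ := Finset.card_pos.mp hpos
      have hcard2 : S.card ≤ ((S.erase u).filter (fun v => 1 ≤ w u v)).card
          + (Finset.univ.filter fun v => w u v = 0).card := by
        refine le_trans (Finset.card_le_card ?_) (Finset.card_union_le _ _)
        intro v hv
        by_cases hvu : v = u
        · subst hvu
          exact Finset.mem_union_right _
            (Finset.mem_filter.mpr ⟨Finset.mem_univ _, hdiag v⟩)
        · by_cases h0 : w u v = 0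
          · exact Finset.mem_union_right _
              (Finset.mem_filter.mpr ⟨Finset.mem_univ _, h0⟩)
          · exact Finset.mem_union_left _ (Finset.mem_filter.mpr
              ⟨Finset.mem_erase.mpr ⟨hvu, hv⟩, Nat.one_le_iff_ne_zero.mpr h0⟩)
      have hzu := hZ u
      have hS'big : (k : ℝ) * (θ / 2) < (((S.erase u).filter (fun v => 1 ≤ w u v)).card : ℝ) := by
        have hc2 : (S.card : ℝ) ≤ (((S.erase u).filter (fun v => 1 ≤ w u v)).card : ℝ)
            + ((Finset.univ.filter fun v => w u v = 0).card : ℝ) := by exact_mod_cast hcard2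
        have hS' : ((k : ℝ) + 1) * (θ / 2) < (S.card : ℝ) := by
          have : ((k + 1 : ℕ) : ℝ) = (k : ℝ) + 1 := by push_cast; ring
          rw [this] at hS
          exact hS
        linarith
      obtain ⟨C, hCsub, hCcard, hCpair⟩ := ih _ hS'big
      have huC : u ∉ C := by
        intro h
        have h2 := (Finset.mem_erase.mp (Finset.mem_filter.mp (hCsub h)).1).1
        exact h2 rfl
      refine ⟨insert u C, ?_, ?_, ?_⟩
      · intro v hv
        rcases Finset.mem_insert.mp hv with rfl | hv
        · exact hu
        · exact Finset.mem_of_mem_erase (Finset.mem_filter.mp (hCsub hv)).1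
      · rw [Finset.card_insert_of_notMem huC, hCcard]
      · intro a ha b hb hab
        rcases Finset.mem_insert.mp ha with ha' | ha' <;>
          rcases Finset.mem_insert.mp hb with hb' | hb'
        · exact absurd (ha'.trans hb'.symm) hab
        · rw [ha']
          exact (Finset.mem_filter.mp (hCsub hb')).2
        · rw [hb', hsymm]
          exact (Finset.mem_filter.mp (hCsub ha')).2
        · exact hCpair a ha' b hb' hab
  -- the set of common red neighbours of x, y, z
  set P := Finset.univ.filter (fun u => w u x = 2 ∧ w u y = 2 ∧ w u z = 2) with hPdef
  have hPbound : 2 * (P.card : ℝ) ≤ ((r : ℝ) - 3) * θ := by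
    by_contra hcon
    push_neg at hcon
    have hcast : ((r - 3 : ℕ) : ℝ) = (r : ℝ) - 3 := by
      rw [Nat.cast_sub (by omega : 3 ≤ r)]
      norm_num
    have hgr : ((r - 3 : ℕ) : ℝ) * (θ / 2) < P.card := by
      rw [hcast]; linarith
    obtain ⟨C, hCsub, hCcard, hCpair⟩ := greedy (r - 3) P hgr
    have hPmem : ∀ v ∈ C, w v x = 2 ∧ w v y = 2 ∧ w v z = 2 := by
      intro v hv
      have := hCsub hv
      rw [hPdef] at this
      exact (Finset.mem_filter.mp this).2
    have hxC : x ∉ C := fun h => by have := (hPmem x h).1; rw [hdiag] at this; omega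
    have hyC : y ∉ C := fun h => by have := (hPmem y h).2.1; rw [hdiag] at this; omega
    have hzC : z ∉ C := fun h => by have := (hPmem z h).2.2; rw [hdiag] at this; omega
    have hymem : y ∉ insert z C := by
      simp only [Finset.mem_insert]
      push_neg
      exact ⟨hyz_ne, hyC⟩
    have hxmem : x ∉ insert y (insert z C) := by
      simp only [Finset.mem_insert]
      push_neg
      exact ⟨hxy_ne, hxz_ne, hxC⟩
    have hcards : (insert x (insert y (insert z C))).card = r + 1 := by
      rw [Finset.card_insert_of_notMem hxmem, Finset.card_insert_of_notMem hymem,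
        Finset.card_insert_of_notMem hzC, hCcard]
      omega
    apply hBK
    refine hasSub_BK' w _ hcards ?_
    intro a ha b hb hab
    simp only [Finset.mem_insert] at ha hb
    rcases ha with rfl | rfl | rfl | ha <;> rcases hb with rfl | rfl | rfl | hb
    · exact absurd rfl hab
    · omega
    · omega
    · have := (hPmem b hb).1; have hs := hsymm a b; omega
    · have hs := hsymm a b; omega
    · exact absurd rfl hab
    · omega
    · have := (hPmem b hb).2.1; have hs := hsymm a b; omega
    · have hs := hsymm a b; omega
    · have hs := hsymm a b; omega
    · exact absurd rfl hab
    · have := (hPmem b hb).2.2; have hs := hsymm a b; omega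
    · have := (hPmem a ha).1; omega
    · have := (hPmem a ha).2.1; omega
    · have := (hPmem a ha).2.2; omega
    · have := hCpair a ha b hb hab; omega
  -- pointwise deficiency bound
  have point : ∀ u : V, 18 ≤ 4 * (∑ a ∈ A, (2 - w u a)) + 4 * (∑ b ∈ B, (2 - w u b))
      + 3 * (2 - w u x) + 3 * (2 - w u y) + 6 * (2 - w u z)
      + (if u ∈ P then 2 else 0) := by
    intro u
    have hux2 := hle u x
    have huy2 := hle u y
    have huz2 := hle u z
    have hA0 : (∑ a ∈ A, (2 - w u a)) = 0 → ∀ a ∈ A, w u a = 2 := by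
      intro h0 a ha
      have h1 := (Finset.sum_eq_zero_iff.mp h0) a ha
      have h2 := hle u a
      omega
    have hB0 : (∑ b ∈ B, (2 - w u b)) = 0 → ∀ b ∈ B, w u b = 2 := by
      intro h0 b hb
      have h1 := (Finset.sum_eq_zero_iff.mp h0) b hb
      have h2 := hle u b
      omega
    have hA2 : ∀ a ∈ A, w u a = 0 → 2 ≤ ∑ a ∈ A, (2 - w u a) := by
      intro a ha h0
      have h1 : 2 - w u a = 2 := by omega
      calc (2 : ℕ) = 2 - w u a := h1.symm
        _ ≤ ∑ a ∈ A, (2 - w u a) :=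
            Finset.single_le_sum (f := fun a => 2 - w u a) (fun _ _ => Nat.zero_le _) ha
    have hB2 : ∀ b ∈ B, w u b = 0 → 2 ≤ ∑ b ∈ B, (2 - w u b) := by
      intro b hb h0
      have h1 : 2 - w u b = 2 := by omega
      calc (2 : ℕ) = 2 - w u b := h1.symm
        _ ≤ ∑ b ∈ B, (2 - w u b) :=
            Finset.single_le_sum (f := fun b => 2 - w u b) (fun _ _ => Nat.zero_le _) hb
    -- red trap
    have redTrap : ∀ (S : Finset V) (p : V), S.card = r - 2 → p ∉ S →
        (∀ a ∈ S, ∀ a' ∈ S, a ≠ a' → w a a' = 2) → (∀ a ∈ S, w a p = 2) →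
        (∀ a ∈ S, w u a = 2) → w u p = 2 → False := by
      intro S p hSc hpS hScl hSp hall hup
      have huS : u ∉ S := by
        intro h
        have := hall u h
        rw [hdiag] at this
        omega
      have hup_ne : u ≠ p := by
        rintro rfl
        rw [hdiag] at hup
        omega
      have hpmem : p ∉ insert u S := by
        simp only [Finset.mem_insert]
        push_neg
        exact ⟨fun h => hup_ne h.symm, hpS⟩
      have hc1 : (insert p (insert u S)).card = r := by
        rw [Finset.card_insert_of_notMem hpmem, Finset.card_insert_of_notMem huS, hSc]
        omega
      apply hRK
      refine hasSub_RK' w _ hc1 ?_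
      intro a ha b hb hab
      simp only [Finset.mem_insert] at ha hb
      rcases ha with rfl | rfl | ha <;> rcases hb with rfl | rfl | hb
      · exact absurd rfl hab
      · rw [hsymm]; exact hup
      · rw [hsymm]; exact hSp b hb
      · exact hup
      · exact absurd rfl hab
      · exact hall b hb
      · exact hSp a ha
      · rw [hsymm]; exact hall a ha
      · exact hScl a ha b hb hab
    -- blue trap
    have blueTrap : ∀ (S : Finset V) (p q : V), S.card = r - 2 → p ∉ S → q ∉ S → p ≠ q →
        (∀ a ∈ S, ∀ a' ∈ S, a ≠ a' → w a a' = 2) → (∀ a ∈ S, w a p = 2 ∧ w a q = 2) →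
        w p q = 1 → (∀ a ∈ S, 1 ≤ w u a) → 1 ≤ w u p → 1 ≤ w u q → False := by
      intro S p q hSc hpS hqS hpq hScl hSpq hwpq hall hup huq
      have huS : u ∉ S := by
        intro h
        have := hall u h
        rw [hdiag] at this
        omega
      have hup_ne : u ≠ p := by
        rintro rfl
        rw [hdiag] at hup
        omega
      have huq_ne : u ≠ q := by
        rintro rfl
        rw [hdiag] at huq
        omega
      have hqmem : q ∉ (S : Finset V) := hqS
      have hpmem : p ∉ insert q S := by
        simp only [Finset.mem_insert]
        push_neg
        exact ⟨hpq, hpS⟩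
      have humem : u ∉ insert p (insert q S) := by
        simp only [Finset.mem_insert]
        push_neg
        exact ⟨hup_ne, huq_ne, huS⟩
      have hc1 : (insert u (insert p (insert q S))).card = r + 1 := by
        rw [Finset.card_insert_of_notMem humem, Finset.card_insert_of_notMem hpmem,
          Finset.card_insert_of_notMem hqmem, hSc]
        omega
      apply hBK
      refine hasSub_BK' w _ hc1 ?_
      intro a ha b hb hab
      simp only [Finset.mem_insert] at ha hb
      rcases ha with rfl | rfl | rfl | ha <;> rcases hb with rfl | rfl | rfl | hb
      · exact absurd rfl hab
      · exact hup
      · exact huq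
      · exact hall b hb
      · have hs := hsymm a b; omega
      · exact absurd rfl hab
      · omega
      · have := (hSpq b hb).1; have hs := hsymm a b; omega
      · have hs := hsymm a b; omega
      · have hs := hsymm a b; omega
      · exact absurd rfl hab
      · have := (hSpq b hb).2; have hs := hsymm a b; omega
      · have hs := hsymm a b; have := hall a ha; omega
      · have := (hSpq a ha).1; omega
      · have := (hSpq a ha).2; omega
      · have := hScl a ha b hb hab; omega
    have h1 : (∑ a ∈ A, (2 - w u a)) = 0 → w u x ≤ 1 := by
      intro h0
      by_contra hcon
      have hux : w u x = 2 := by omega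
      exact redTrap A x hAcard hxA hAcl (fun a ha => (hAred a ha).1) (hA0 h0) hux
    have h2 : (∑ a ∈ A, (2 - w u a)) = 0 → w u z ≤ 1 := by
      intro h0
      by_contra hcon
      have huz : w u z = 2 := by omega
      exact redTrap A z hAcard hzA hAcl (fun a ha => (hAred a ha).2) (hA0 h0) huz
    have h3 : (∑ b ∈ B, (2 - w u b)) = 0 → w u y ≤ 1 := by
      intro h0
      by_contra hcon
      have huy : w u y = 2 := by omega
      exact redTrap B y hBcard hyB hBcl (fun b hb => (hBred b hb).1) (hB0 h0) huy
    have h4 : (∑ b ∈ B, (2 - w u b)) = 0 → w u z ≤ 1 := by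
      intro h0
      by_contra hcon
      have huz : w u z = 2 := by omega
      exact redTrap B z hBcard hzB hBcl (fun b hb => (hBred b hb).2) (hB0 h0) huz
    have h5 : 1 ≤ w u x → 1 ≤ w u z → 2 ≤ ∑ a ∈ A, (2 - w u a) := by
      intro p1 p2
      by_contra hcon
      have hall : ∀ a ∈ A, 1 ≤ w u a := by
        intro a ha
        by_contra h0'
        have h0 : w u a = 0 := by omega
        have := hA2 a ha h0
        omega
      exact blueTrap A x z hAcard hxA hzA hxz_ne hAcl hAred hxz hall p1 p2
    have h6 : 1 ≤ w u y → 1 ≤ w u z → 2 ≤ ∑ b ∈ B, (2 - w u b) := by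
      intro p1 p2
      by_contra hcon
      have hall : ∀ b ∈ B, 1 ≤ w u b := by
        intro b hb
        by_contra h0'
        have h0 : w u b = 0 := by omega
        have := hB2 b hb h0
        omega
      exact blueTrap B y z hBcard hyB hzB hyz_ne hBcl hBred hyz hall p1 p2
    by_cases hp : u ∈ P
    · have hm : w u x = 2 ∧ w u y = 2 ∧ w u z = 2 := by
        rw [hPdef] at hp
        exact (Finset.mem_filter.mp hp).2
      rw [if_pos hp]
      have e5 := h5 (by omega) (by omega)
      have e6 := h6 (by omega) (by omega)
      omega
    · rw [if_neg hp]
      have hm : ¬(w u x = 2 ∧ w u y = 2 ∧ w u z = 2) := by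
        intro hcontra
        exact hp (by rw [hPdef]; exact Finset.mem_filter.mpr ⟨Finset.mem_univ u, hcontra⟩)
      have h1' : (∑ a ∈ A, (2 - w u a)) ≠ 0 ∨ w u x ≤ 1 := by
        by_cases h : (∑ a ∈ A, (2 - w u a)) = 0
        · exact Or.inr (h1 h)
        · exact Or.inl h
      have h2' : (∑ a ∈ A, (2 - w u a)) ≠ 0 ∨ w u z ≤ 1 := by
        by_cases h : (∑ a ∈ A, (2 - w u a)) = 0
        · exact Or.inr (h2 h)
        · exact Or.inl h
      have h3' : (∑ b ∈ B, (2 - w u b)) ≠ 0 ∨ w u y ≤ 1 := by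
        by_cases h : (∑ b ∈ B, (2 - w u b)) = 0
        · exact Or.inr (h3 h)
        · exact Or.inl h
      have h4' : (∑ b ∈ B, (2 - w u b)) ≠ 0 ∨ w u z ≤ 1 := by
        by_cases h : (∑ b ∈ B, (2 - w u b)) = 0
        · exact Or.inr (h4 h)
        · exact Or.inl h
      have h5' : w u x = 0 ∨ w u z = 0 ∨ 2 ≤ ∑ a ∈ A, (2 - w u a) := by
        by_cases e1 : w u x = 0
        · exact Or.inl e1
        by_cases e2 : w u z = 0
        · exact Or.inr (Or.inl e2)
        exact Or.inr (Or.inr (h5 (by omega) (by omega)))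
      have h6' : w u y = 0 ∨ w u z = 0 ∨ 2 ≤ ∑ b ∈ B, (2 - w u b) := by
        by_cases e1 : w u y = 0
        · exact Or.inl e1
        by_cases e2 : w u z = 0
        · exact Or.inr (Or.inl e2)
        exact Or.inr (Or.inr (h6 (by omega) (by omega)))
      omega
  -- sum the pointwise bound
  have hite : (∑ u : V, (if u ∈ P then 2 else 0)) = 2 * P.card := by
    rw [Finset.sum_ite_mem, Finset.univ_inter, Finset.sum_const, smul_eq_mul]
    ring
  have hsum1 : 18 * Fintype.card V ≤
      (∑ u : V, (4 * (∑ a ∈ A, (2 - w u a)) + 4 * (∑ b ∈ B, (2 - w u b))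
        + 3 * (2 - w u x) + 3 * (2 - w u y) + 6 * (2 - w u z)))
      + 2 * P.card := by
    calc 18 * Fintype.card V = ∑ _u : V, 18 := by
          rw [Finset.sum_const, Finset.card_univ, smul_eq_mul, mul_comm]
      _ ≤ ∑ u : V, (4 * (∑ a ∈ A, (2 - w u a)) + 4 * (∑ b ∈ B, (2 - w u b))
            + 3 * (2 - w u x) + 3 * (2 - w u y) + 6 * (2 - w u z)
            + (if u ∈ P then 2 else 0)) := Finset.sum_le_sum fun u _ => point u
      _ = (∑ u : V, (4 * (∑ a ∈ A, (2 - w u a)) + 4 * (∑ b ∈ B, (2 - w u b))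
            + 3 * (2 - w u x) + 3 * (2 - w u y) + 6 * (2 - w u z)))
          + ∑ u : V, (if u ∈ P then 2 else 0) := Finset.sum_add_distrib
      _ = _ := by rw [hite]
  -- swap sums
  have hswap : (∑ u : V, (4 * (∑ a ∈ A, (2 - w u a)) + 4 * (∑ b ∈ B, (2 - w u b))
        + 3 * (2 - w u x) + 3 * (2 - w u y) + 6 * (2 - w u z)))
      = 4 * (∑ a ∈ A, ∑ u : V, (2 - w u a)) + 4 * (∑ b ∈ B, ∑ u : V, (2 - w u b))
        + 3 * (∑ u : V, (2 - w u x)) + 3 * (∑ u : V, (2 - w u y))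
        + 6 * (∑ u : V, (2 - w u z)) := by
    rw [Finset.sum_add_distrib, Finset.sum_add_distrib, Finset.sum_add_distrib,
      Finset.sum_add_distrib, ← Finset.mul_sum, ← Finset.mul_sum, ← Finset.mul_sum,
      ← Finset.mul_sum, ← Finset.mul_sum]
    rw [Finset.sum_comm (s := Finset.univ) (t := A) (f := fun u a => 2 - w u a),
      Finset.sum_comm (s := Finset.univ) (t := B) (f := fun u b => 2 - w u b)]
  -- cast the columns
  have hcolcast : ∀ v : V, ((∑ u : V, (2 - w u v) : ℕ) : ℝ) = ∑ u : V, (2 - (w u v : ℝ)) := by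
    intro v
    rw [Nat.cast_sum]
    refine Finset.sum_congr rfl fun u _ => ?_
    rw [Nat.cast_sub (hle u v)]
    norm_num
  have hcolRN : ∀ v : V, ((∑ u : V, (2 - w u v) : ℕ) : ℝ) < θ := by
    intro v
    rw [hcolcast v]
    exact hcol v
  have hAne : A.Nonempty := Finset.card_pos.mp (by rw [hAcard]; omega)
  have hBne : B.Nonempty := Finset.card_pos.mp (by rw [hBcard]; omega)
  have hAsum : (∑ a ∈ A, ((∑ u : V, (2 - w u a) : ℕ) : ℝ)) < ((r : ℝ) - 2) * θ := by
    have h1 : (∑ a ∈ A, ((∑ u : V, (2 - w u a) : ℕ) : ℝ)) < ∑ _a ∈ A, θ :=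
      Finset.sum_lt_sum_of_nonempty hAne fun a _ => hcolRN a
    rw [Finset.sum_const, nsmul_eq_mul, hAcard] at h1
    have hcast : ((r - 2 : ℕ) : ℝ) = (r : ℝ) - 2 := by
      rw [Nat.cast_sub (by omega : 2 ≤ r)]
      norm_num
    rw [hcast] at h1
    exact h1
  have hBsum : (∑ b ∈ B, ((∑ u : V, (2 - w u b) : ℕ) : ℝ)) < ((r : ℝ) - 2) * θ := by
    have h1 : (∑ b ∈ B, ((∑ u : V, (2 - w u b) : ℕ) : ℝ)) < ∑ _b ∈ B, θ :=
      Finset.sum_lt_sum_of_nonempty hBne fun b _ => hcolRN b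
    rw [Finset.sum_const, nsmul_eq_mul, hBcard] at h1
    have hcast : ((r - 2 : ℕ) : ℝ) = (r : ℝ) - 2 := by
      rw [Nat.cast_sub (by omega : 2 ≤ r)]
      norm_num
    rw [hcast] at h1
    exact h1
  -- assemble over ℝ
  have hc1 : 18 * (Fintype.card V : ℝ) ≤
      4 * (∑ a ∈ A, ((∑ u : V, (2 - w u a) : ℕ) : ℝ))
      + 4 * (∑ b ∈ B, ((∑ u : V, (2 - w u b) : ℕ) : ℝ))
      + 3 * ((∑ u : V, (2 - w u x) : ℕ) : ℝ) + 3 * ((∑ u : V, (2 - w u y) : ℕ) : ℝ)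
      + 6 * ((∑ u : V, (2 - w u z) : ℕ) : ℝ) + 2 * (P.card : ℝ) := by
    have h0 := hsum1
    rw [hswap] at h0
    have h1 : ((18 * Fintype.card V : ℕ) : ℝ) ≤
        ((4 * (∑ a ∈ A, ∑ u : V, (2 - w u a)) + 4 * (∑ b ∈ B, ∑ u : V, (2 - w u b))
          + 3 * (∑ u : V, (2 - w u x)) + 3 * (∑ u : V, (2 - w u y))
          + 6 * (∑ u : V, (2 - w u z)) + 2 * P.card : ℕ) : ℝ) := by
      exact_mod_cast h0
    push_cast at h1
    convert h1 using 2 <;> push_cast <;> ring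
  have hfin : 18 * (Fintype.card V : ℝ) < (9 * (r : ℝ) - 7) * θ := by
    have hx3 := hcolRN x
    have hy3 := hcolRN y
    have hz3 := hcolRN z
    nlinarith [hAsum, hBsum, hPbound, hc1]
  -- final arithmetic contradiction
  have hn1 : (1 : ℝ) ≤ (Fintype.card V : ℝ) := by
    have : 0 < Fintype.card V := Fintype.card_pos_iff.mpr ⟨x⟩
    exact_mod_cast this
  have hid : (2 - (14 * (r : ℝ) - 24) / (7 * (r : ℝ) - 5)) * (7 * (r : ℝ) - 5) = 14 := by
    rw [sub_mul, div_mul_cancel₀ _ h75.ne']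
    ring
  rw [hθ] at hfin
  nlinarith [mul_lt_mul_of_pos_right hfin h75, hid, hn1, h75]

/-- Lemma: in a `{RK_r, BK_{r+1}}`-free coloured graph with minimum degree greater than
`((14r-24)/(7r-5))·n` in which all weight-`1` edges are secure, every wicked triangle
possesses a green edge; in particular there is no blue wicked triangle. -/
theorem wicked_has_green {V : Type*} [Fintype V] (r : ℕ) (hr : 3 ≤ r)
    (w : V → V → ℕ) (hG : IsColoured w)
    (hRK : ¬ HasSub w (RK r)) (hBK : ¬ HasSub w (BK (r + 1)))
    (hdeg : ∀ x : V,
      (14 * (r : ℝ) - 24) / (7 * (r : ℝ) - 5) * (Fintype.card V : ℝ) < ∑ y : V, (w x y : ℝ))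
    (hsec : ∀ x y : V, x ≠ y → w x y = 1 → Secure w r x y) :
    (∀ x y z : V, x ≠ y → x ≠ z → y ≠ z →
      w x y = 2 → w x z ≤ 1 → w y z ≤ 1 → w x z = 0 ∨ w y z = 0) ∧
    (∀ x y z : V, x ≠ y → x ≠ z → y ≠ z →
      ¬ (w x y = 2 ∧ w x z = 1 ∧ w y z = 1)) := by
  have key : ∀ x y z : V, w x y = 2 → w x z = 1 → w y z = 1 → False :=
    fun x y z hxy hxz hyz =>
      blue_wicked_false r hr w hG hRK hBK hdeg hsec x y z hxy hxz hyz
  constructor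
  · intro x y z _ _ _ hxy hxz hyz
    by_contra hcon
    push_neg at hcon
    obtain ⟨h1, h2⟩ := hcon
    exact key x y z hxy (by omega) (by omega)
  · rintro x y z - - - ⟨hxy, hxz, hyz⟩
    exact key x y z hxy hxz hyz
end

section
/- Every coloured graph G on n vertices that contains no edge of weight 2 and no BK_3 as a subgraph, and satisfies δ(G) > (2/5)·n, admits a homomorphism to RK_2^-; explicitly, there is a partition V(G) = W_1 ∪ W_2 such that w(x,y) = 0 for any two distinct vertices x, y in the same class. -/
/-!
The weight-one edges form a simple graph; it is triangle-free and has minimum degree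
greater than `2n/5`, and such a graph is bipartite. Otherwise take a shortest odd closed
walk `p`, of length `L ≥ 5`. Two neighbours of a vertex `y` on `p` must lie at cyclic
distance two, or `y` would close a shorter odd walk along one of the two arcs between
them; hence every vertex has at most two neighbours among the positions of `p`. Summing
degrees over these positions gives `L · 2n/5 < 2n`, so `L < 5`.
-/

open Finset

namespace SimpleGraph.Walk

variable {V : Type*} {G : SimpleGraph V}

lemma exists_walk_getVert_getVert {u v : V} (p : G.Walk u v) {a b : ℕ} (hab : a ≤ b)
    (hb : b ≤ p.length) :
    ∃ q : G.Walk (p.getVert a) (p.getVert b), q.length = b - a :=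
  ⟨((p.drop a).take (b - a)).copy rfl (by rw [drop_getVert, Nat.add_sub_cancel' hab]), by
    simp only [length_copy, take_length, drop_length]; omega⟩

lemma exists_shortest_odd_loop (h : ∃ u, ∃ p : G.Walk u u, Odd p.length) :
    ∃ u, ∃ p : G.Walk u u, Odd p.length ∧
      ∀ v (q : G.Walk v v), Odd q.length → p.length ≤ q.length := by
  classical
  have hex : ∃ n, ∃ u, ∃ p : G.Walk u u, Odd p.length ∧ p.length = n :=
    let ⟨u, p, hp⟩ := h; ⟨_, u, p, hp, rfl⟩
  obtain ⟨u, p, hodd, hlen⟩ := Nat.find_spec hex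
  exact ⟨u, p, hodd, fun v q hq => hlen ▸ Nat.find_min' hex ⟨v, q, hq, rfl⟩⟩

variable {u : V} {p : G.Walk u u}

lemma eq_add_two_or_add_two_eq_of_adj_getVert (hodd : Odd p.length)
    (hmin : ∀ v (q : G.Walk v v), Odd q.length → p.length ≤ q.length)
    {y : V} {a b : ℕ} (hab : a < b) (hb : b < p.length)
    (ha : G.Adj y (p.getVert a)) (hb' : G.Adj y (p.getVert b)) :
    b = a + 2 ∨ b + 2 = a + p.length := by
  obtain ⟨q, hq⟩ := p.exists_walk_getVert_getVert hab.le hb.le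
  have hshort := hmin _ (cons ha (q.concat hb'.symm))
  have hlong := hmin _ (cons hb' (((p.drop b).append (p.take a)).concat ha.symm))
  simp only [length_cons, length_concat, length_append, drop_length, take_length, hq,
    Nat.odd_iff] at hodd hshort hlong
  omega

lemma card_adj_getVert_le_two [DecidableRel G.Adj] (hodd : Odd p.length)
    (hmin : ∀ v (q : G.Walk v v), Odd q.length → p.length ≤ q.length)
    (h5 : 5 ≤ p.length) (y : V) :
    #{i ∈ range p.length | G.Adj y (p.getVert i)} ≤ 2 := by
  by_contra! h
  obtain ⟨a, b, c, ha, hb, hc, hab, hac, hbc⟩ := two_lt_card_iff.mp h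
  have pair : ∀ i ∈ {i ∈ range p.length | G.Adj y (p.getVert i)},
      ∀ j ∈ {i ∈ range p.length | G.Adj y (p.getVert i)},
      i < j → j = i + 2 ∨ j + 2 = i + p.length := by
    simp only [mem_filter, mem_range]
    exact fun i hi j hj hij => eq_add_two_or_add_two_eq_of_adj_getVert hodd hmin hij hj.1 hi.2 hj.2
  have := pair a ha b hb; have := pair b hb a ha; have := pair a ha c hc
  have := pair c hc a ha; have := pair b hb c hc; have := pair c hc b hb
  simp only [mem_filter, mem_range] at ha hb hc
  obtain ⟨k, hk⟩ := hodd
  omega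

lemma five_le_length_of_odd (hG : G.CliqueFree 3) (hodd : Odd p.length) :
    5 ≤ p.length := by
  have adj := fun i (hi : i < p.length) => p.adj_getVert_succ hi
  have hne1 : p.length ≠ 1 := fun h1 => by
    have h01 := adj 0 (by omega)
    rw [zero_add, ← h1, getVert_length, getVert_zero] at h01
    exact h01.ne rfl
  have hne3 : p.length ≠ 3 := fun h3 => by
    classical
    have h01 := adj 0 (by omega)
    have h12 := adj 1 (by omega)
    have h20 := adj 2 (by omega)
    rw [getVert_zero] at h01
    rw [show 2 + 1 = p.length by omega, getVert_length] at h20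
    exact hG _ (is3Clique_triple_iff.mpr ⟨h01, h20.symm, h12⟩)
  obtain ⟨k, hk⟩ := hodd
  omega

end SimpleGraph.Walk

namespace SimpleGraph

variable {V : Type*} {G : SimpleGraph V} [Fintype V] [DecidableRel G.Adj]

lemma sum_degree_le_mul_card {ι : Type*} (s : Finset ι) (f : ι → V) {k : ℕ}
    (h : ∀ y, #{i ∈ s | G.Adj y (f i)} ≤ k) :
    ∑ i ∈ s, G.degree (f i) ≤ k * Fintype.card V := by
  classical
  calc ∑ i ∈ s, G.degree (f i) = ∑ i ∈ s, #{y | G.Adj (f i) y} := by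
        simp only [← card_neighborFinset_eq_degree, neighborFinset_eq_filter]
    _ = ∑ y, #{i ∈ s | G.Adj (f i) y} := sum_card_bipartiteAbove_eq_sum_card_bipartiteBelow _
    _ ≤ ∑ _y : V, k := sum_le_sum fun y _ => by simpa only [G.adj_comm] using h y
    _ = k * Fintype.card V := by simp [mul_comm]

theorem colorable_two_of_cliqueFree_three (hG : G.CliqueFree 3)
    (hdeg : ∀ v, 2 * Fintype.card V < 5 * G.degree v) : G.Colorable 2 := by
  rw [two_colorable_iff_forall_loop_even]
  by_contra! h
  obtain ⟨u, p, hodd, hmin⟩ :=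
    Walk.exists_shortest_odd_loop (by simpa only [Nat.not_even_iff_odd] using h)
  have h5 := p.five_le_length_of_odd hG hodd
  have hupper := sum_degree_le_mul_card (range p.length) p.getVert
    (p.card_adj_getVert_le_two hodd hmin h5)
  have hlower :
      p.length * (2 * Fintype.card V) < 5 * ∑ i ∈ range p.length, G.degree (p.getVert i) := by
    rw [mul_sum]
    simpa using sum_lt_sum_of_nonempty (nonempty_range_iff.mpr (by omega))
      fun i _ => hdeg (p.getVert i)
  nlinarith [Nat.mul_le_mul_right (2 * Fintype.card V) h5]

end SimpleGraph

def weightGraph {V : Type*} (w : V → V → ℕ) : SimpleGraph V :=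
  SimpleGraph.fromRel fun x y => w x y ≠ 0

section weightGraph

variable {V : Type*} {w : V → V → ℕ}

lemma weightGraph_adj (hsymm : ∀ x y, w x y = w y x) {x y : V} :
    (weightGraph w).Adj x y ↔ x ≠ y ∧ w x y ≠ 0 := by
  simp [weightGraph, hsymm y x]

lemma cliqueFree_three_weightGraph (hsymm : ∀ x y, w x y = w y x) (hBK3 : ¬ HasSub w (BK 3)) :
    (weightGraph w).CliqueFree 3 := by
  refine SimpleGraph.cliqueFree_iff.mpr ⟨fun e => hBK3 ⟨e, e.injective, fun x y => ?_⟩⟩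
  by_cases hxy : x = y
  · simp [BK, hxy]
  · have := ((weightGraph_adj hsymm).mp (e.toHom.map_adj (by simpa using hxy))).2
    simpa only [BK, hxy, if_false, Nat.one_le_iff_ne_zero, SimpleGraph.Copy.coe_toHom]
      using this

lemma degree_weightGraph [Fintype V] [DecidableRel (weightGraph w).Adj]
    (hsymm : ∀ x y, w x y = w y x) (hdiag : ∀ x, w x x = 0) (hle : ∀ x y, w x y ≤ 1)
    (x : V) : (weightGraph w).degree x = ∑ y, w x y := by
  rw [← SimpleGraph.card_neighborFinset_eq_degree, SimpleGraph.neighborFinset_eq_filter,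
    card_filter]
  refine sum_congr rfl fun y _ => ?_
  by_cases hxy : x = y
  · simp [hxy, hdiag]
  · have := hle x y
    by_cases h : w x y = 0 <;> simp [weightGraph_adj hsymm, hxy, h]
    omega

end weightGraph

/-- If a coloured graph contains no edge of weight `2` and no `BK_3`, and has minimum
degree greater than `(2/5)·n`, then it admits a homomorphism to `RK_2^-`, i.e. a
partition into two classes all of whose internal edges have weight `0`. -/
theorem small_case {V : Type*} [Fintype V]
    (w : V → V → ℕ) (hG : IsColoured w)
    (hnored : ∀ x y : V, w x y ≠ 2)
    (hBK3 : ¬ HasSub w (BK 3))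
    (hdeg : ∀ x : V, (2 / 5 : ℝ) * (Fintype.card V : ℝ) < ∑ y : V, (w x y : ℝ)) :
    ∃ f : V → Fin 2, ∀ x y : V, x ≠ y → f x = f y → w x y = 0 := by
  classical
  obtain ⟨hsymm, hle_two, hdiag⟩ := hG
  have hle : ∀ x y, w x y ≤ 1 := fun x y => by
    have := hle_two x y
    have := hnored x y
    omega
  have hmindeg : ∀ x, 2 * Fintype.card V < 5 * (weightGraph w).degree x := fun x => by
    have hx := hdeg x
    rw [degree_weightGraph hsymm hdiag hle]
    exact_mod_cast (by linarith : (2 * Fintype.card V : ℝ) < 5 * ∑ y, (w x y : ℝ))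
  obtain ⟨c⟩ := SimpleGraph.colorable_two_of_cliqueFree_three
    (cliqueFree_three_weightGraph hsymm hBK3) hmindeg
  exact ⟨c, fun x y hxy hcol =>
    by_contra fun hw => c.valid ((weightGraph_adj hsymm).mpr ⟨hxy, hw⟩) hcol⟩
end

section
/- For every integer r ≥ 2 and every positive integer n divisible by 3r−1, there exists a coloured graph G on n vertices that is 𝓕_{2r+1}-free, has δ(G) = ((6r−8)/(3r−1))·n, and admits no homomorphism to RK_r. Consequently, the constant (6r−8)/(3r−1) in the minimum degree condition of the odd main theorem cannot be lowered. -/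
/-!
Write `n = (3r-1)k`. The graph is a blow-up of the join `K_{r-2} ∨ C₅`, all of whose edges are
red: each vertex of `K_{r-2}` becomes an independent set of size `3k` and each vertex of `C₅` one
of size `k`. Every vertex then has degree `2(3r-4)k = ((6r-8)/(3r-1))n`. Any two vertices of
`G_{2r+1,i}` are joined, so a copy of it would give a clique on `2r+1-i ≥ r+1` vertices in
`K_{r-2} ∨ C₅`, whose clique number is `r`. A homomorphism to `RK_r` is a proper `r`-colouring
of the blow-up, hence of `K_{r-2} ∨ C₅`; but the `r-2` colours of `K_{r-2}` leave only two for
the odd cycle `C₅`.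
-/

theorem one_le_Gt {t i : ℕ} {x y : Fin (t - i)} (h : x ≠ y) : 1 ≤ Gt t i x y := by
  unfold Gt; split_ifs <;> omega

namespace SimpleGraph

variable {V W : Type*}

theorem CliqueFree.of_hom {G : SimpleGraph V} {H : SimpleGraph W} {n : ℕ} (f : G →g H)
    (h : H.CliqueFree n) : G.CliqueFree n := by
  contrapose! h
  let g := f.comp (topEmbeddingOfNotCliqueFree h).toHom
  exact IsContained.not_cliqueFree ⟨g.toCopy (Hom.injective_of_top_hom g)⟩

theorem IsClique.card_le_of_cliqueFree {G : SimpleGraph V} {s : Finset V} {p : ℕ}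
    (hs : G.IsClique s) (hG : G.CliqueFree (p + 1)) : s.card ≤ p := by
  by_contra! hp
  obtain ⟨t, hts, ht⟩ := Finset.exists_subset_card_eq hp
  exact hG t ⟨hs.subset (by simpa using hts), ht⟩

theorem Colorable.of_comap_of_surjective {H : SimpleGraph W} {π : V → W}
    (hπ : Function.Surjective π) {n : ℕ} (h : (H.comap π).Colorable n) : H.Colorable n :=
  h.of_hom ⟨Function.surjInv hπ, by simp [Function.surjInv_eq hπ]⟩

theorem degree_comap_sigma_fst [Fintype V] [Fintype W] (H : SimpleGraph W) [DecidableRel H.Adj]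
    {m : W → ℕ} (e : V ≃ Σ b, Fin (m b)) (x : V) :
    (H.comap fun y => (e y).1).degree x = ∑ b ∈ H.neighborFinset (e x).1, m b := by
  rw [← card_neighborFinset_eq_degree, neighborFinset_eq_filter, Finset.card_filter,
    neighborFinset_eq_filter, Finset.sum_filter]
  simp only [comap_adj]
  rw [Equiv.sum_comp e (fun z => if H.Adj (e x).1 z.1 then 1 else 0), Fintype.sum_sigma]
  simp [apply_ite Finset.card]

section RedWeight

variable (G : SimpleGraph V) [DecidableRel G.Adj]

def redWeight (x y : V) : ℕ := if G.Adj x y then 2 else 0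

theorem isColoured_redWeight : IsColoured G.redWeight := by
  refine ⟨fun x y => by simp only [redWeight, G.adj_comm], fun x y => ?_,
    fun x => by simp [redWeight]⟩
  unfold redWeight; split_ifs <;> omega

theorem famFree_redWeight {t : ℕ} (hG : G.CliqueFree (t - t / 2)) : FamFree G.redWeight t := by
  rintro i - hi ⟨φ, -, hφ⟩
  let f : (⊤ : SimpleGraph (Fin (t - i))) →g G := ⟨φ, fun {x y} hxy => by
    have := (one_le_Gt hxy).trans (hφ x y)
    unfold redWeight at this; split_ifs at this with h <;> simp_all⟩
  exact IsContained.not_cliqueFree ⟨f.toCopy (Hom.injective_of_top_hom f)⟩ (hG.mono (by omega))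

theorem colorable_of_redWeight_eq_zero {r : ℕ} (f : V → Fin r)
    (hf : ∀ x y, x ≠ y → f x = f y → G.redWeight x y = 0) : G.Colorable r :=
  ⟨Coloring.mk f fun {x y} hxy hf' => by simpa [redWeight, hxy] using hf x y hxy.ne hf'⟩

theorem sum_redWeight [Fintype V] (x : V) : ∑ y, G.redWeight x y = 2 * G.degree x := by
  rw [← card_neighborFinset_eq_degree, neighborFinset_eq_filter, Finset.card_filter,
    Finset.mul_sum]
  simp [redWeight]

end RedWeight

section Join

variable {α β : Type*}

def join (G : SimpleGraph α) (H : SimpleGraph β) : SimpleGraph (α ⊕ β) where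
  Adj
    | .inl a, .inl a' => G.Adj a a'
    | .inr b, .inr b' => H.Adj b b'
    | _, _ => True
  symm := ⟨by
    rintro (a | b) (a' | b') h
    exacts [h.symm, trivial, trivial, h.symm]⟩
  loopless := ⟨by
    rintro (a | b) h
    exacts [G.loopless.irrefl a h, H.loopless.irrefl b h]⟩

variable {G : SimpleGraph α} {H : SimpleGraph β}

@[simp] theorem join_adj_inl_inl {a a' : α} : (G.join H).Adj (.inl a) (.inl a') ↔ G.Adj a a' :=
  Iff.rfl

@[simp] theorem join_adj_inr_inr {b b' : β} : (G.join H).Adj (.inr b) (.inr b') ↔ H.Adj b b' :=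
  Iff.rfl

@[simp] theorem join_adj_inl_inr {a : α} {b : β} : (G.join H).Adj (.inl a) (.inr b) := trivial

@[simp] theorem join_adj_inr_inl {a : α} {b : β} : (G.join H).Adj (.inr b) (.inl a) := trivial

instance [DecidableRel G.Adj] [DecidableRel H.Adj] : DecidableRel (G.join H).Adj
  | .inl _, .inl _ => decidable_of_iff _ join_adj_inl_inl.symm
  | .inr _, .inr _ => decidable_of_iff _ join_adj_inr_inr.symm
  | .inl _, .inr _ => .isTrue trivial
  | .inr _, .inl _ => .isTrue trivial

section Finite

variable [Fintype α] [Fintype β] [DecidableRel G.Adj] [DecidableRel H.Adj]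

theorem neighborFinset_join_inl (a : α) :
    (G.join H).neighborFinset (.inl a) = (G.neighborFinset a).disjSum Finset.univ := by
  ext (a' | b) <;> simp

theorem neighborFinset_join_inr (b : β) :
    (G.join H).neighborFinset (.inr b) = Finset.univ.disjSum (H.neighborFinset b) := by
  ext (a | b') <;> simp

end Finite

theorem CliqueFree.join {p q : ℕ} (hG : G.CliqueFree (p + 1)) (hH : H.CliqueFree (q + 1)) :
    (G.join H).CliqueFree (p + q + 1) := by
  intro s hs
  have hl : G.IsClique (s.toLeft : Set α) := fun a ha a' ha' hne => join_adj_inl_inl.mp <|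
    hs.isClique (by simpa using ha) (by simpa using ha') (by simpa using hne)
  have hr : H.IsClique (s.toRight : Set β) := fun b hb b' hb' hne => join_adj_inr_inr.mp <|
    hs.isClique (by simpa using hb) (by simpa using hb') (by simpa using hne)
  have hcard := hs.card_eq
  rw [← Finset.card_toLeft_add_card_toRight] at hcard
  have := hl.card_le_of_cliqueFree hG
  have := hr.card_le_of_cliqueFree hH
  omega

theorem Colorable.of_top_join [Fintype α] {q : ℕ}
    (h : ((⊤ : SimpleGraph α).join H).Colorable (Fintype.card α + q)) : H.Colorable q := by
  obtain ⟨c⟩ := h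
  set S := Finset.univ.image (c ∘ Sum.inl)
  have hS : S.card = Fintype.card α :=
    Finset.card_image_of_injective _ fun a a' h => by_contra fun hne => c.valid (by simpa) h
  have hc : ∀ b, c (.inr b) ∉ S := by
    simp only [S, Finset.mem_image, Finset.mem_univ, true_and, not_exists]
    exact fun b a h => c.valid join_adj_inl_inr h
  have := (Coloring.mk (fun b => (⟨c (.inr b), hc b⟩ : {i // i ∉ S}))
    fun hbb' h => c.valid (join_adj_inr_inr.mpr hbb') (congrArg Subtype.val h)).colorable
  simpa [Fintype.card_subtype_compl, hS] using this

end Join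

theorem not_colorable_two_cycleGraph_of_odd {n : ℕ} (hn : 2 ≤ n) (hOdd : Odd n) :
    ¬ (cycleGraph n).Colorable 2 := fun h => by
  have := h.chromaticNumber_le
  rw [chromaticNumber_cycleGraph_of_odd n hn hOdd] at this
  exact absurd this (by decide)

theorem cliqueFree_three_cycleGraph_five : (cycleGraph 5).CliqueFree 3 := by
  intro s hs
  obtain ⟨a, b, c, hab, hac, hbc, -⟩ := is3Clique_iff.mp hs
  revert a b c
  decide

theorem cliqueFree_top_join_cycleGraph_five (m : ℕ) :
    ((⊤ : SimpleGraph (Fin m)).join (cycleGraph 5)).CliqueFree (m + 2 + 1) :=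
  (cliqueFree_of_card_lt (by simp)).join cliqueFree_three_cycleGraph_five

theorem not_colorable_top_join_cycleGraph_five (m : ℕ) :
    ¬ ((⊤ : SimpleGraph (Fin m)).join (cycleGraph 5)).Colorable (m + 2) := fun h =>
  not_colorable_two_cycleGraph_of_odd (n := 5) (by norm_num) (by decide)
    (Colorable.of_top_join (α := Fin m) (by simpa using h))

theorem sum_neighborFinset_top_join_cycleGraph_five (m k : ℕ) (c : Fin m ⊕ Fin 5) :
    ∑ b ∈ ((⊤ : SimpleGraph (Fin m)).join (cycleGraph 5)).neighborFinset c,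
      Sum.elim (fun _ => 3 * k) (fun _ => k) b = (3 * m + 2) * k := by
  rcases c with a | b
  · obtain ⟨j, rfl⟩ : ∃ j, m = j + 1 := ⟨m - 1, by have := a.pos; omega⟩
    rw [neighborFinset_join_inl, Finset.sum_disjSum]
    simp only [Sum.elim_inl, Sum.elim_inr, Finset.sum_const, card_neighborFinset_eq_degree,
      complete_graph_degree, smul_eq_mul, Finset.card_univ, Fintype.card_fin, Nat.add_sub_cancel]
    ring
  · rw [neighborFinset_join_inr, Finset.sum_disjSum]
    simp only [Sum.elim_inl, Sum.elim_inr, Finset.sum_const, card_neighborFinset_eq_degree,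
      cycleGraph_degree_three_le, smul_eq_mul, Finset.card_univ, Fintype.card_fin]
    ring

end SimpleGraph

open SimpleGraph in
/-- Optimality in the odd case: for every `r ≥ 2` and `n > 0` divisible by `3r - 1` there
is an `𝓕_{2r+1}`-free coloured graph on `n` vertices with minimum degree exactly
`((6r-8)/(3r-1))·n` admitting no homomorphism to `RK_r`. -/
theorem odd_optimal (r n : ℕ) (hr : 2 ≤ r) (hn : 0 < n) (hdvd : 3 * r - 1 ∣ n) :
    ∃ w : Fin n → Fin n → ℕ, IsColoured w ∧ FamFree w (2 * r + 1) ∧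
      (∀ x : Fin n, (6 * (r : ℝ) - 8) / (3 * (r : ℝ) - 1) * (n : ℝ) ≤ ∑ y : Fin n, (w x y : ℝ)) ∧
      (∃ x : Fin n, ∑ y : Fin n, (w x y : ℝ) = (6 * (r : ℝ) - 8) / (3 * (r : ℝ) - 1) * (n : ℝ)) ∧
      ¬ ∃ f : Fin n → Fin r, ∀ x y : Fin n, x ≠ y → f x = f y → w x y = 0 := by
  obtain ⟨m, rfl⟩ : ∃ m, r = m + 2 := ⟨r - 2, by omega⟩
  obtain ⟨k, rfl⟩ := hdvd
  rw [show 3 * (m + 2) - 1 = 3 * m + 5 by omega] at hn ⊢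
  have hk : 0 < k := Nat.pos_of_mul_pos_left hn
  set H := (⊤ : SimpleGraph (Fin m)).join (cycleGraph 5)
  set size : Fin m ⊕ Fin 5 → ℕ := Sum.elim (fun _ => 3 * k) (fun _ => k)
  obtain ⟨e⟩ : Nonempty (Fin ((3 * m + 5) * k) ≃ Σ b, Fin (size b)) :=
    ⟨Fintype.equivOfCardEq (by simp [size]; ring)⟩
  set π := fun y => (e y).1
  have hπ : Function.Surjective π := fun b =>
    ⟨e.symm ⟨b, ⟨0, by cases b <;> simp [size] <;> omega⟩⟩, by simp [π]⟩
  have hdeg : ∀ x, ∑ y, ((H.comap π).redWeight x y : ℝ) = (6 * ((m + 2 : ℕ) : ℝ) - 8) /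
      (3 * ((m + 2 : ℕ) : ℝ) - 1) * ((3 * m + 5) * k : ℕ) := by
    intro x
    rw [← Nat.cast_sum, sum_redWeight, degree_comap_sigma_fst,
      sum_neighborFinset_top_join_cycleGraph_five]
    have : (3 * ((m : ℝ) + 2) - 1) ≠ 0 := by linarith [m.cast_nonneg (α := ℝ)]
    push_cast
    field_simp
    ring
  refine ⟨(H.comap π).redWeight, isColoured_redWeight _, famFree_redWeight _ ?_,
    fun x => (hdeg x).ge, ⟨⟨0, hn⟩, hdeg _⟩, ?_⟩
  · exact ((cliqueFree_top_join_cycleGraph_five m).of_hom ⟨π, id⟩).mono (by omega)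
  · rintro ⟨f, hf⟩
    exact not_colorable_top_join_cycleGraph_five m
      ((colorable_of_redWeight_eq_zero _ f hf).of_comap_of_surjective hπ)
end

section
/- For every integer r ≥ 3 and every positive integer n divisible by 7r−5, there exists a coloured graph G on n vertices that is 𝓕_{2r}-free, has δ(G) = ((14r−24)/(7r−5))·n, and admits no homomorphism to RK_r^-. Consequently, the constant (14r−24)/(7r−5) in the minimum degree condition of the even main theorem cannot be lowered. (Such a graph is obtained from a partition V = A_1 ∪ … ∪ A_{r−3} ∪ B' ∪ B'' ∪ C' ∪ C'' with |A_i| = 7n/(7r−5), |B'| = |B''| = 6n/(7r−5), |C'| = |C''| = 2n/(7r−5), by giving weight 0 to all pairs inside a class and all pairs between C' and C'', weight 1 to all pairs between B' and C' and between B'' and C'', and weight 2 to all remaining pairs.) -/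
namespace EO

def sz (s m b : ℕ) : ℕ := if b < s then 7*m else if b < s+2 then 6*m else 2*m

def W (s a b : ℕ) : ℕ :=
  if a = b then 0
  else if (a = s+2 ∧ b = s+3) ∨ (a = s+3 ∧ b = s+2) then 0
  else if (a = s ∧ b = s+2) ∨ (a = s+2 ∧ b = s) ∨ (a = s+1 ∧ b = s+3) ∨ (a = s+3 ∧ b = s+1) then 1
  else 2

lemma W_symm (s a b : ℕ) : W s a b = W s b a := by unfold W; split_ifs <;> omega

lemma W_le (s a b : ℕ) : W s a b ≤ 2 := by unfold W; split_ifs <;> omega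

lemma W_self (s a : ℕ) : W s a a = 0 := by unfold W; split_ifs <;> omega

lemma W_small (s a i : ℕ) (hi : i < s) : W s a i = if a = i then 0 else 2 := by
  unfold W; split_ifs <;> omega

lemma sum_sz (s m : ℕ) : ∑ b : Fin (s+4), sz s m b.val = (7*s+16)*m := by
  rw [Fin.sum_univ_eq_sum_range (fun i => sz s m i)]
  rw [Finset.sum_range_succ, Finset.sum_range_succ, Finset.sum_range_succ,
    Finset.sum_range_succ]
  have h : ∀ i ∈ Finset.range s, sz s m i = 7*m := fun i hi => by
    unfold sz; rw [if_pos (Finset.mem_range.mp hi)]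
  rw [Finset.sum_congr rfl h, Finset.sum_const, Finset.card_range, smul_eq_mul]
  have e1 : sz s m s = 6*m := by unfold sz; split_ifs <;> omega
  have e2 : sz s m (s+1) = 6*m := by unfold sz; split_ifs <;> omega
  have e3 : sz s m (s+2) = 2*m := by unfold sz; split_ifs <;> omega
  have e4 : sz s m (s+3) = 2*m := by unfold sz; split_ifs <;> omega
  rw [e1, e2, e3, e4]; ring

noncomputable def e (s m : ℕ) : (Σ b : Fin (s+4), Fin (sz s m b.val)) ≃ Fin ((7*s+16)*m) :=
  Fintype.equivFinOfCardEq
    (by rw [Fintype.card_sigma]; simp only [Fintype.card_fin]; exact sum_sz s m)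

noncomputable def cls (s m : ℕ) (v : Fin ((7*s+16)*m)) : Fin (s+4) := ((e s m).symm v).1

noncomputable def w (s m : ℕ) (x y : Fin ((7*s+16)*m)) : ℕ :=
  W s (cls s m x).val (cls s m y).val

lemma cls_e (s m : ℕ) (p : Σ b : Fin (s+4), Fin (sz s m b.val)) :
    cls s m (e s m p) = p.1 := by simp [cls]

set_option linter.unnecessarySeqFocus false in
lemma key (s m a : ℕ) (ha : a < s + 4) :
    ∑ b : Fin (s+4), ((sz s m b.val * W s a b.val : ℕ) : ℝ) = (14*s+18)*m := by
  rw [Fin.sum_univ_eq_sum_range (fun i => ((sz s m i * W s a i : ℕ) : ℝ))]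
  rw [Finset.sum_range_succ, Finset.sum_range_succ, Finset.sum_range_succ,
    Finset.sum_range_succ]
  have h : ∀ i ∈ Finset.range s,
      ((sz s m i * W s a i : ℕ) : ℝ) = 14*m - (if a = i then (14*m : ℝ) else 0) := by
    intro i hi
    have hi' := Finset.mem_range.mp hi
    have hsz : sz s m i = 7*m := by unfold sz; rw [if_pos hi']
    rw [hsz, W_small s a i hi']
    split_ifs with h
    · simp
    · push_cast; ring
  rw [Finset.sum_congr rfl h, Finset.sum_sub_distrib, Finset.sum_const,
    Finset.card_range, Finset.sum_ite_eq, nsmul_eq_mul]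
  have e1 : sz s m s = 6*m := by unfold sz; split_ifs <;> omega
  have e2 : sz s m (s+1) = 6*m := by unfold sz; split_ifs <;> omega
  have e3 : sz s m (s+2) = 2*m := by unfold sz; split_ifs <;> omega
  have e4 : sz s m (s+3) = 2*m := by unfold sz; split_ifs <;> omega
  rcases show a < s ∨ a = s ∨ a = s+1 ∨ a = s+2 ∨ a = s+3 by omega with h5 | h5 | h5 | h5 | h5
  · have w1 : W s a s = 2 := by unfold W; split_ifs <;> omega
    have w2 : W s a (s+1) = 2 := by unfold W; split_ifs <;> omega
    have w3 : W s a (s+2) = 2 := by unfold W; split_ifs <;> omega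
    have w4 : W s a (s+3) = 2 := by unfold W; split_ifs <;> omega
    rw [e1, e2, e3, e4, w1, w2, w3, w4, if_pos (Finset.mem_range.mpr h5)]
    push_cast; ring
  · have w1 : W s a s = 0 := by unfold W; split_ifs <;> omega
    have w2 : W s a (s+1) = 2 := by unfold W; split_ifs <;> omega
    have w3 : W s a (s+2) = 1 := by unfold W; split_ifs <;> omega
    have w4 : W s a (s+3) = 2 := by unfold W; split_ifs <;> omega
    rw [e1, e2, e3, e4, w1, w2, w3, w4, if_neg (by simp only [Finset.mem_range]; omega)]
    push_cast; ring
  · have w1 : W s a s = 2 := by unfold W; split_ifs <;> omega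
    have w2 : W s a (s+1) = 0 := by unfold W; split_ifs <;> omega
    have w3 : W s a (s+2) = 2 := by unfold W; split_ifs <;> omega
    have w4 : W s a (s+3) = 1 := by unfold W; split_ifs <;> omega
    rw [e1, e2, e3, e4, w1, w2, w3, w4, if_neg (by simp only [Finset.mem_range]; omega)]
    push_cast; ring
  · have w1 : W s a s = 1 := by unfold W; split_ifs <;> omega
    have w2 : W s a (s+1) = 2 := by unfold W; split_ifs <;> omega
    have w3 : W s a (s+2) = 0 := by unfold W; split_ifs <;> omega
    have w4 : W s a (s+3) = 0 := by unfold W; split_ifs <;> omega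
    rw [e1, e2, e3, e4, w1, w2, w3, w4, if_neg (by simp only [Finset.mem_range]; omega)]
    push_cast; ring
  · have w1 : W s a s = 2 := by unfold W; split_ifs <;> omega
    have w2 : W s a (s+1) = 1 := by unfold W; split_ifs <;> omega
    have w3 : W s a (s+2) = 0 := by unfold W; split_ifs <;> omega
    have w4 : W s a (s+3) = 0 := by unfold W; split_ifs <;> omega
    rw [e1, e2, e3, e4, w1, w2, w3, w4, if_neg (by simp only [Finset.mem_range]; omega)]
    push_cast; ring

lemma deg (s m : ℕ) (x : Fin ((7*s+16)*m)) :
    ∑ y, (w s m x y : ℝ) = (14*s+18)*m := by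
  have h0 : ∑ y, (w s m x y : ℝ)
      = ∑ p : (Σ b : Fin (s+4), Fin (sz s m b.val)), (w s m x (e s m p) : ℝ) :=
    (Equiv.sum_comp (e s m) (fun y => (w s m x y : ℝ))).symm
  rw [h0, ← Finset.univ_sigma_univ, Finset.sum_sigma]
  have h1 : ∀ b : Fin (s+4), ∑ k : Fin (sz s m b.val), (w s m x (e s m ⟨b, k⟩) : ℝ)
      = ((sz s m b.val * W s (cls s m x).val b.val : ℕ) : ℝ) := by
    intro b
    have h2 : ∀ k : Fin (sz s m b.val),
        (w s m x (e s m ⟨b, k⟩) : ℝ) = ((W s (cls s m x).val b.val : ℕ) : ℝ) := by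
      intro k; unfold w; rw [cls_e]
    rw [Finset.sum_congr rfl (fun k _ => h2 k), Finset.sum_const, Finset.card_univ,
      Fintype.card_fin, nsmul_eq_mul]
    push_cast; ring
  rw [Finset.sum_congr rfl (fun b _ => h1 b)]
  exact key s m _ (cls s m x).isLt

noncomputable def sg (s m : ℕ) (x : Fin ((7*s+16)*m)) : Fin (s+3) :=
  ⟨if (cls s m x).val = s+3 then s+2 else (cls s m x).val, by
    have h := (cls s m x).isLt; split_ifs <;> omega⟩

lemma W0 (s a b : ℕ) (ha : a < s+4) (hb : b < s+4) :
    W s a b = 0 ↔ (if a = s+3 then s+2 else a) = (if b = s+3 then s+2 else b) := by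
  unfold W; split_ifs <;> (try omega) <;> simp_all <;> omega

lemma w_eq_zero_iff (s m : ℕ) (x y : Fin ((7*s+16)*m)) :
    w s m x y = 0 ↔ sg s m x = sg s m y := by
  rw [Fin.ext_iff]
  exact W0 s _ _ (cls s m x).isLt (cls s m y).isLt

lemma sz_pos (s m b : ℕ) (hm : 0 < m) : 0 < sz s m b := by
  unfold sz; split_ifs <;> omega

noncomputable def rep (s m : ℕ) (hm : 0 < m) (p : Fin (s+4)) : Fin ((7*s+16)*m) :=
  e s m ⟨p, ⟨0, sz_pos s m p.val hm⟩⟩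

lemma cls_rep (s m : ℕ) (hm : 0 < m) (p : Fin (s+4)) : cls s m (rep s m hm p) = p :=
  cls_e s m _

lemma w_rep (s m : ℕ) (hm : 0 < m) (p q : Fin (s+4)) :
    w s m (rep s m hm p) (rep s m hm q) = W s p.val q.val := by
  unfold w; rw [cls_rep, cls_rep]

lemma sg_rep (s m : ℕ) (hm : 0 < m) (p : Fin (s+4)) :
    (sg s m (rep s m hm p)).val = if p.val = s+3 then s+2 else p.val := by
  simp only [sg, cls_rep]

lemma exists_red (s m : ℕ) (hm : 0 < m) (a b : Fin (s+3)) (hab : a ≠ b) :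
    ∃ x y : Fin ((7*s+16)*m), sg s m x = a ∧ sg s m y = b ∧ w s m x y = 2 := by
  have ha := a.isLt
  have hb := b.isLt
  have hab' : a.val ≠ b.val := fun h => hab (Fin.ext h)
  refine ⟨rep s m hm ⟨if a.val = s+2 ∧ b.val = s then s+3 else a.val, by split_ifs <;> omega⟩,
    rep s m hm ⟨if b.val = s+2 ∧ a.val = s then s+3 else b.val, by split_ifs <;> omega⟩,
    ?_, ?_, ?_⟩
  · apply Fin.ext
    rw [sg_rep]
    simp only [Fin.val_mk]
    split_ifs <;> omega
  · apply Fin.ext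
    rw [sg_rep]
    simp only [Fin.val_mk]
    split_ifs <;> omega
  · rw [w_rep]
    unfold W
    simp only [Fin.val_mk]
    split_ifs <;> omega

lemma famfree (s m : ℕ) (hm : 0 < m) : FamFree (w s m) (2 * (s+3)) := by
  intro i h1 h2 ⟨φ, hinj, hle⟩
  -- every pair of distinct vertices of `Gt` has weight ≥ 1
  have hge1 : ∀ x y : Fin (2*(s+3) - i), x ≠ y → 1 ≤ w s m (φ x) (φ y) := by
    intro x y hxy
    refine le_trans ?_ (hle x y)
    unfold Gt
    rw [if_neg hxy]
    split_ifs <;> omega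
  -- hence `sg ∘ φ` is injective, giving `2(s+3) - i ≤ s + 3`
  have hsg : Function.Injective (fun x => sg s m (φ x)) := by
    intro x y h
    by_contra hxy
    have := hge1 x y hxy
    rw [(w_eq_zero_iff s m (φ x) (φ y)).mpr h] at this
    omega
  have hcard : 2*(s+3) - i ≤ s + 3 := by
    have := Fintype.card_le_of_injective _ hsg
    simpa using this
  have hi : i = s + 3 := by omega
  have hti : 2*(s+3) - i = s + 3 := by omega
  -- so `Gt` is a red clique: all classes are pairwise "red" (weight 2)
  have hc : Function.Injective (fun x => cls s m (φ x)) := by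
    intro x y h
    by_contra hxy
    have h1' := hge1 x y hxy
    have h' : cls s m (φ x) = cls s m (φ y) := h
    have : w s m (φ x) (φ y) = 0 := by
      unfold w; rw [h']; exact W_self s _
    omega
  have hall2 : ∀ x y : Fin (2*(s+3) - i), x ≠ y →
      2 ≤ W s (cls s m (φ x)).val (cls s m (φ y)).val := by
    intro x y hxy
    refine le_trans ?_ (hle x y)
    unfold Gt
    rw [if_neg hxy, if_pos ⟨by omega, by omega⟩]
  -- at most one element of `Fin (s+4)` is missed by `cls ∘ φ`
  have claim : ∀ a b : Fin (s+4), a ≠ b →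
      (∃ x, cls s m (φ x) = a) ∨ (∃ x, cls s m (φ x) = b) := by
    intro a b hab
    by_contra hcon
    push_neg at hcon
    obtain ⟨hna, hnb⟩ := hcon
    have hsub : Finset.univ.image (fun x => cls s m (φ x)) ⊆
        (Finset.univ : Finset (Fin (s+4))) \ {a, b} := by
      intro v hv
      simp only [Finset.mem_image, Finset.mem_univ, true_and] at hv
      obtain ⟨x, hx⟩ := hv
      simp only [Finset.mem_sdiff, Finset.mem_univ, Finset.mem_insert,
        Finset.mem_singleton, true_and]
      push_neg
      exact ⟨hx ▸ hna x, hx ▸ hnb x⟩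
    have h3 := Finset.card_le_card hsub
    rw [Finset.card_image_of_injective _ hc, Finset.card_univ, Fintype.card_fin,
      Finset.card_sdiff_of_subset (by simp)] at h3
    rw [Finset.card_univ, Fintype.card_fin, Finset.card_insert_of_notMem (by simpa using hab),
      Finset.card_singleton] at h3
    omega
  -- derive a contradiction: some forbidden pair appears
  have getpair : ∀ (A B : ℕ) (hA : A < s+4) (hB : B < s+4), A ≠ B →
      (∃ x, cls s m (φ x) = ⟨A, hA⟩) → (∃ x, cls s m (φ x) = ⟨B, hB⟩) →
      2 ≤ W s A B := by
    rintro A B hA hB hAB ⟨x, hx⟩ ⟨y, hy⟩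
    have hxy : x ≠ y := by
      intro h
      rw [h, hy] at hx
      exact hAB (by simpa using (congrArg Fin.val hx).symm)
    have := hall2 x y hxy
    rw [hx, hy] at this
    exact this
  have wlow : ∀ A B : ℕ, ((A = s ∧ B = s+2) ∨ (A = s+2 ∧ B = s+3) ∨ (A = s+1 ∧ B = s+3)) →
      W s A B ≤ 1 := by
    intro A B h
    unfold W; split_ifs <;> omega
  rcases claim ⟨s+2, by omega⟩ ⟨s+3, by omega⟩ (by simp) with h23 | h33
  · rcases claim ⟨s, by omega⟩ ⟨s+3, by omega⟩ (by simp [Fin.ext_iff]) with h0 | h3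
    · have := getpair s (s+2) (by omega) (by omega) (by omega) h0 h23
      have := wlow s (s+2) (by omega)
      omega
    · have := getpair (s+2) (s+3) (by omega) (by omega) (by omega) h23 h3
      have := wlow (s+2) (s+3) (by omega)
      omega
  · rcases claim ⟨s+1, by omega⟩ ⟨s+2, by omega⟩ (by simp [Fin.ext_iff]) with h1' | h2'
    · have := getpair (s+1) (s+3) (by omega) (by omega) (by omega) h1' h33
      have := wlow (s+1) (s+3) (by omega)
      omega
    · have := getpair (s+2) (s+3) (by omega) (by omega) (by omega) h2' h33
      have := wlow (s+2) (s+3) (by omega)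
      omega

lemma nohom (s m : ℕ) (hm : 0 < m) :
    ¬ ∃ (f : Fin ((7*s+16)*m) → Fin (s+3)) (i j : Fin (s+3)), i ≠ j ∧
        (∀ x y, x ≠ y → f x = f y → w s m x y = 0) ∧
        (∀ x y, f x = i → f y = j → w s m x y ≤ 1) := by
  rintro ⟨f, i, j, hij, hind, hcross⟩
  -- `sg` is constant on fibers of `f`
  have hfib : ∀ x y, f x = f y → sg s m x = sg s m y := by
    intro x y h
    rcases eq_or_ne x y with rfl | hxy
    · rfl
    · exact (w_eq_zero_iff s m x y).mp (hind x y hxy h)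
  classical
  set g : Fin (s+3) → Fin (s+3) :=
    fun k => if h : ∃ x, f x = k then sg s m h.choose else k with hg
  have hgf : ∀ x, g (f x) = sg s m x := by
    intro x
    have hex : ∃ y, f y = f x := ⟨x, rfl⟩
    simp only [hg, dif_pos hex]
    exact hfib _ _ hex.choose_spec
  -- `sg` is surjective
  have hsgsurj : Function.Surjective (sg s m) := by
    intro a
    refine ⟨rep s m hm ⟨a.val, by omega⟩, Fin.ext ?_⟩
    rw [sg_rep]
    simp only [Fin.val_mk]
    have := a.isLt
    split_ifs <;> omega
  have hgsurj : Function.Surjective g := by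
    intro a
    obtain ⟨x, hx⟩ := hsgsurj a
    exact ⟨f x, by rw [hgf, hx]⟩
  have hginj : Function.Injective g := Finite.injective_iff_surjective.mpr hgsurj
  have hgij : g i ≠ g j := fun h => hij (hginj h)
  obtain ⟨x, y, hx, hy, hw⟩ := exists_red s m hm (g i) (g j) hgij
  have hfx : f x = i := hginj (by rw [hgf, hx])
  have hfy : f y = j := hginj (by rw [hgf, hy])
  have := hcross x y hfx hfy
  omega

end EO

/-- Optimality in the even case: for every `r ≥ 3` and `n > 0` divisible by `7r - 5`
there is an `𝓕_{2r}`-free coloured graph on `n` vertices with minimum degree exactly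
`((14r-24)/(7r-5))·n` admitting no homomorphism to `RK_r^-`. -/


theorem even_optimal (r n : ℕ) (hr : 3 ≤ r) (hn : 0 < n) (hdvd : 7 * r - 5 ∣ n) :
    ∃ w : Fin n → Fin n → ℕ, IsColoured w ∧ FamFree w (2 * r) ∧
      (∀ x : Fin n,
        (14 * (r : ℝ) - 24) / (7 * (r : ℝ) - 5) * (n : ℝ) ≤ ∑ y : Fin n, (w x y : ℝ)) ∧
      (∃ x : Fin n,
        ∑ y : Fin n, (w x y : ℝ) = (14 * (r : ℝ) - 24) / (7 * (r : ℝ) - 5) * (n : ℝ)) ∧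
      ¬ ∃ (f : Fin n → Fin r) (i j : Fin r), i ≠ j ∧
          (∀ x y : Fin n, x ≠ y → f x = f y → w x y = 0) ∧
          (∀ x y : Fin n, f x = i → f y = j → w x y ≤ 1) := by
  obtain ⟨s, rfl⟩ : ∃ s, r = s + 3 := ⟨r - 3, by omega⟩
  obtain ⟨m, rfl⟩ := hdvd
  have hm : 0 < m := by
    rcases Nat.eq_zero_or_pos m with h | h
    · subst h; simp at hn
    · exact h
  have hrw : 7 * (s + 3) - 5 = 7 * s + 16 := by omega
  rw [hrw]
  have hval : ∀ x : Fin ((7*s+16)*m), ∑ y, (EO.w s m x y : ℝ)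
      = (14 * ((s:ℝ) + 3) - 24) / (7 * ((s:ℝ) + 3) - 5) * (((7*s+16)*m : ℕ) : ℝ) := by
    intro x
    rw [EO.deg s m x]
    have h16 : (7 * (s:ℝ) + 16) ≠ 0 := by positivity
    have h1 : (14 * ((s:ℝ) + 3) - 24) = 14*s + 18 := by ring
    have h2 : (7 * ((s:ℝ) + 3) - 5) = 7*s + 16 := by ring
    rw [h1, h2]
    push_cast
    field_simp
  refine ⟨EO.w s m, ⟨?_, ?_, ?_⟩, ?_, ?_, ?_, ?_⟩
  · intro x y; exact EO.W_symm s _ _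
  · intro x y; exact EO.W_le s _ _
  · intro x; exact EO.W_self s _
  · exact EO.famfree s m hm
  · intro x
    rw [hval x]
    push_cast
    exact le_rfl
  · refine ⟨EO.rep s m hm ⟨0, by omega⟩, ?_⟩
    rw [hval _]
    push_cast
    ring
  · have := EO.nohom s m hm
    intro hcon
    apply this
    obtain ⟨f, i, j, hij, h1, h2⟩ := hcon
    exact ⟨f, i, j, hij, h1, h2⟩
end

section
/- (Andrásfai–Erdős–Sós) Let r ≥ 2 be an integer and let G be a K_{r+1}-free simple graph on n vertices with minimum degree δ(G) > ((3r−4)/(3r−1))·n. Then G is r-colourable, i.e., there is a graph homomorphism from G to K_r. -/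
open SimpleGraph

/-- Theorem (Andrásfai–Erdős–Sós): for `r ≥ 2`, every `K_{r+1}`-free simple graph on `n`
vertices with minimum degree greater than `((3r-4)/(3r-1))·n` is `r`-colourable. -/
theorem andrasfai_erdos_sos {V : Type*} [Fintype V] (r : ℕ) (hr : 2 ≤ r)
    (G : SimpleGraph V) [DecidableRel G.Adj]
    (hfree : G.CliqueFree (r + 1))
    (hdeg : ∀ v : V,
      (3 * (r : ℝ) - 4) / (3 * (r : ℝ) - 1) * (Fintype.card V : ℝ) < G.degree v) :
    G.Colorable r := by
  cases isEmpty_or_nonempty V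
  · exact .of_isEmpty r
  refine colorable_of_cliqueFree_lt_minDegree hfree ?_
  obtain ⟨v, hv⟩ := G.exists_minimal_degree_vertex
  -- Mathlib's bound uses truncating division in `ℕ`, which is the floor of the real quotient.
  rw [hv, ← Nat.floor_div_eq_div (K := ℝ), Nat.floor_lt (by positivity)]
  push_cast [Nat.cast_sub (by omega : 4 ≤ 3 * r), Nat.cast_sub (by omega : 1 ≤ 3 * r)]
  rw [← div_mul_eq_mul_div]
  exact hdeg v
end

section
/- Let D ⊆ ℝ_{≥0} be a finite set with 0 ∈ D and let 𝓕 be a set of weighted graphs. For each positive integer n let ex_D(n, 𝓕) be the maximum of e(G) over all 𝓕-free weighted graphs G of order n whose weight function attains values only in D. Then the limit π_D(𝓕) = lim_{n→∞} ex_D(n, 𝓕)/(n²/2) exists. -/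
/-! Deleting one vertex of a weighted graph on `n + 1` vertices and averaging over the vertex
deleted counts every edge `n - 1` times, so `(n - 1) ex_D(n + 1, 𝓕) ≤ (n + 1) ex_D(n, 𝓕)`
because `𝓕`-freeness survives vertex deletion. Hence `ex_D(n, 𝓕) / (n (n - 1))` is
nonincreasing for `n ≥ 2`; being nonnegative it converges, and so does `ex_D(n, 𝓕) / (n² / 2)`. -/

open Filter Finset Topology

lemma exists_tendsto_div_sq_of_mul_succ_le {a : ℕ → ℝ} (ha : ∀ n, 0 ≤ a n)
    (hsucc : ∀ n : ℕ, 2 ≤ n → ((n : ℝ) - 1) * a (n + 1) ≤ (n + 1) * a n) :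
    ∃ L, Tendsto (fun n : ℕ => a n / ((n : ℝ) ^ 2 / 2)) atTop (𝓝 L) := by
  set b : ℕ → ℝ := fun k => a (k + 2) / ((k + 2) * (k + 1))
  have hanti : Antitone b := antitone_nat_of_succ_le fun k => by
    have h := hsucc (k + 2) (by omega)
    simp only [b]
    push_cast at h ⊢
    rw [div_le_div_iff₀ (by positivity) (by positivity)]
    nlinarith [ha (k + 2), ha (k + 3)]
  have hb := tendsto_atTop_ciInf hanti
    ⟨0, by rintro _ ⟨k, rfl⟩; exact div_nonneg (ha _) (by positivity)⟩
  have hfactor : Tendsto (fun n : ℕ => (2 : ℝ) * (1 - 1 / (n : ℝ))) atTop (𝓝 2) := by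
    simpa using (tendsto_one_div_atTop_nhds_zero_nat.const_sub 1).const_mul (2 : ℝ)
  refine ⟨_, (tendsto_add_atTop_iff_nat 2).1 <|
    (hb.mul (hfactor.comp (tendsto_add_atTop_nat 2))).congr fun k => ?_⟩
  simp only [b, Function.comp_apply]
  push_cast
  field_simp
  ring

/-- Summing over the deleted vertex counts each off-diagonal entry `n - 1` times. -/
lemma sum_sum_submatrix_succAbove {R : Type*} [CommRing R] {n : ℕ}
    (w : Matrix (Fin (n + 1)) (Fin (n + 1)) R) (hsymm : ∀ x y, w x y = w y x)
    (hdiag : ∀ x, w x x = 0) :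
    ∑ v : Fin (n + 1), ∑ x, ∑ y, w.submatrix v.succAbove v.succAbove x y
      = (n - 1) * ∑ x, ∑ y, w x y := by
  have hdelete (v : Fin (n + 1)) (f : Fin (n + 1) → R) :
      ∑ x : Fin n, f (v.succAbove x) = ∑ a, f a - f v := by
    rw [Fin.sum_univ_succAbove f v]; ring
  have hrow (v : Fin (n + 1)) :
      ∑ x, ∑ y, w.submatrix v.succAbove v.succAbove x y
        = ∑ x, ∑ y, w x y - 2 * ∑ y, w v y := by
    simp only [Matrix.submatrix_apply, hdelete v (w _), sum_sub_distrib,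
      hdelete v fun a => ∑ b, w a b, hdelete v fun a => w a v, hdiag]
    rw [sum_congr rfl fun a _ => hsymm a v]
    ring
  simp only [hrow, sum_sub_distrib, sum_const, card_univ, Fintype.card_fin, nsmul_eq_mul,
    ← mul_sum]
  push_cast
  ring

namespace WeightedGraph

variable {n : ℕ}

/-- `e(G)` for the weighted graph with weight matrix `w`. -/
noncomputable def edgeWeight (w : Fin n → Fin n → ℝ) : ℝ := (1 / 2) * ∑ x, ∑ y, w x y

def IsFree (𝓕 : Set (Σ m : ℕ, Fin m → Fin m → ℝ)) (w : Fin n → Fin n → ℝ) : Prop :=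
  ∀ F ∈ 𝓕, ¬ ∃ φ : Fin F.1 → Fin n, Function.Injective φ ∧ ∀ x y, F.2 x y ≤ w (φ x) (φ y)

/-- `ex_D(n, 𝓕)` is the supremum of this set. -/
def extremalSet (D : Set ℝ) (𝓕 : Set (Σ m : ℕ, Fin m → Fin m → ℝ)) (n : ℕ) : Set ℝ :=
  {e | ∃ w : Fin n → Fin n → ℝ, (∀ x y, w x y = w y x) ∧ (∀ x, w x x = 0) ∧
    (∀ x y, w x y ∈ D) ∧ IsFree 𝓕 w ∧ e = edgeWeight w}

lemma IsFree.submatrix {m : ℕ} {𝓕 : Set (Σ m : ℕ, Fin m → Fin m → ℝ)}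
    {w : Fin n → Fin n → ℝ} (hw : IsFree 𝓕 w) {f : Fin m → Fin n} (hf : Function.Injective f) :
    IsFree 𝓕 (Matrix.submatrix w f f) := by
  rintro F hF ⟨φ, hφ, hle⟩
  exact hw F hF ⟨f ∘ φ, hf.comp hφ, hle⟩

lemma mul_edgeWeight_le_of_forall_submatrix_succAbove_le (w : Fin (n + 1) → Fin (n + 1) → ℝ)
    (hsymm : ∀ x y, w x y = w y x) (hdiag : ∀ x, w x x = 0) {c : ℝ}
    (hc : ∀ v : Fin (n + 1), edgeWeight (Matrix.submatrix w v.succAbove v.succAbove) ≤ c) :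
    ((n : ℝ) - 1) * edgeWeight w ≤ (n + 1) * c :=
  calc ((n : ℝ) - 1) * edgeWeight w
      = ∑ v : Fin (n + 1), edgeWeight (Matrix.submatrix w v.succAbove v.succAbove) := by
        simp only [edgeWeight, ← mul_sum]
        rw [sum_sum_submatrix_succAbove w hsymm hdiag]
        ring
    _ ≤ ∑ _v : Fin (n + 1), c := sum_le_sum fun v _ => hc v
    _ = (n + 1) * c := by simp

variable {D : Set ℝ} {𝓕 : Set (Σ m : ℕ, Fin m → Fin m → ℝ)}

lemma bddAbove_extremalSet (hD : BddAbove D) (n : ℕ) : BddAbove (extremalSet D 𝓕 n) := by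
  obtain ⟨M, hM⟩ := hD
  refine ⟨(1 / 2) * ∑ _x : Fin n, ∑ _y : Fin n, M, ?_⟩
  rintro _ ⟨w, -, -, hwD, -, rfl⟩
  exact mul_le_mul_of_nonneg_left
    (sum_le_sum fun x _ => sum_le_sum fun y _ => hM (hwD x y)) (by norm_num)

lemma sSup_extremalSet_nonneg (hD : ∀ d ∈ D, 0 ≤ d) (n : ℕ) :
    0 ≤ sSup (extremalSet D 𝓕 n) := by
  refine Real.sSup_nonneg ?_
  rintro _ ⟨w, -, -, hwD, -, rfl⟩
  exact mul_nonneg (by norm_num) (sum_nonneg fun x _ => sum_nonneg fun y _ => hD _ (hwD x y))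

lemma mul_sSup_extremalSet_succ_le (hDbdd : BddAbove D) (hD : ∀ d ∈ D, 0 ≤ d) (hn : 2 ≤ n) :
    ((n : ℝ) - 1) * sSup (extremalSet D 𝓕 (n + 1)) ≤ (n + 1) * sSup (extremalSet D 𝓕 n) := by
  have hn1 : (0 : ℝ) < n - 1 := by
    have : (2 : ℝ) ≤ n := by exact_mod_cast hn
    linarith
  rw [mul_comm, ← le_div_iff₀ hn1]
  refine Real.sSup_le ?_ (div_nonneg (by positivity [sSup_extremalSet_nonneg (𝓕 := 𝓕) hD n]) hn1.le)
  rintro _ ⟨w, hsymm, hdiag, hwD, hfree, rfl⟩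
  rw [le_div_iff₀ hn1, mul_comm]
  refine mul_edgeWeight_le_of_forall_submatrix_succAbove_le w hsymm hdiag fun v =>
    le_csSup (bddAbove_extremalSet hDbdd n) ?_
  exact ⟨_, fun x y => hsymm _ _, fun x => hdiag _, fun x y => hwD _ _,
    hfree.submatrix Fin.succAbove_right_injective, rfl⟩

end WeightedGraph

open WeightedGraph in
theorem weighted_turan_density_exists_general (D : Set ℝ) (hDfin : D.Finite)
    (hDnn : ∀ d ∈ D, 0 ≤ d)
    (𝓕 : Set (Σ m : ℕ, Fin m → Fin m → ℝ)) :
    ∃ L : ℝ, Filter.Tendsto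
      (fun n : ℕ =>
        sSup {e : ℝ | ∃ w : Fin n → Fin n → ℝ,
          (∀ x y, w x y = w y x) ∧ (∀ x, w x x = 0) ∧ (∀ x y, w x y ∈ D) ∧
          (∀ F ∈ 𝓕, ¬ ∃ φ : Fin F.1 → Fin n, Function.Injective φ ∧
              ∀ x y, F.2 x y ≤ w (φ x) (φ y)) ∧
          e = (1 / 2) * ∑ x : Fin n, ∑ y : Fin n, w x y} / ((n : ℝ) ^ 2 / 2))
      Filter.atTop (nhds L) :=
  exists_tendsto_div_sq_of_mul_succ_le (a := fun n => sSup (extremalSet D 𝓕 n))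
    (sSup_extremalSet_nonneg hDnn) fun _ hn => mul_sSup_extremalSet_succ_le hDfin.bddAbove hDnn hn

/-- Existence of the generalised Turán density `π_D(𝓕)`: for a finite set
`D ⊆ ℝ_{≥0}` of admissible weights (with `0 ∈ D`) and a family `𝓕` of weighted graphs
(represented, up to isomorphism, as pairs of an order `m` and a weight function on
`Fin m`), the ratio `ex_D(n, 𝓕)/(n²/2)` converges as `n → ∞`.  Here `ex_D(n, 𝓕)` is the
supremum of `e(G) = (1/2)·∑_{(x,y)} w(x,y)` over all `𝓕`-free weighted graphs `G` on `n`
vertices with weights in `D`. -/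
theorem weighted_turan_density_exists (D : Set ℝ) (hDfin : D.Finite) (hD0 : (0 : ℝ) ∈ D)
    (hDnn : ∀ d ∈ D, 0 ≤ d)
    (𝓕 : Set (Σ m : ℕ, Fin m → Fin m → ℝ))
    (h𝓕 : ∀ F ∈ 𝓕, (∀ x y, F.2 x y = F.2 y x) ∧ (∀ x, F.2 x x = 0) ∧
      (∀ x y, 0 ≤ F.2 x y)) :
    ∃ L : ℝ, Filter.Tendsto
      (fun n : ℕ =>
        sSup {e : ℝ | ∃ w : Fin n → Fin n → ℝ,
          (∀ x y, w x y = w y x) ∧ (∀ x, w x x = 0) ∧ (∀ x y, w x y ∈ D) ∧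
          (∀ F ∈ 𝓕, ¬ ∃ φ : Fin F.1 → Fin n, Function.Injective φ ∧
              ∀ x y, F.2 x y ≤ w (φ x) (φ y)) ∧
          e = (1 / 2) * ∑ x : Fin n, ∑ y : Fin n, w x y} / ((n : ℝ) ^ 2 / 2))
      Filter.atTop (nhds L) :=
  weighted_turan_density_exists_general D hDfin hDnn 𝓕
end
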